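/- arXiv:2006.08946 — 8 statements merged into one kernel-verified Lean document; each statement's English description precedes it below -/
import Mathlib

section
/- Let α ∈ (0,1]. Suppose g : ℝ → ℝ is a function such that the bivariate function Dg(x,y) = g(x+y) − g(x) − g(y) is locally Hölder continuous with exponent α on ℝ², i.e., for every compact set Ω ⊂ ℝ² there is a constant K ≥ 0 such that |Dg(p) − Dg(q)| ≤ K·|p − q|^α for all p, q ∈ Ω. Then there exist a function f : ℝ → ℝ that is locally Hölder continuous with exponent α on ℝ (for every compact Ω ⊂ ℝ there is K ≥ 0 with |f(x) − f(y)| ≤ K·|x − y|^α for all x, y ∈ Ω) and an additive function A : ℝ → ℝ (i.e., A(x+y) = A(x) + A(y) for all x, y ∈ ℝ) such that g = f + A. -/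
open Filter intervalIntegral MeasureTheory

/-- If the double difference `Dg(x,y) = g(x+y) - g(x) - g(y)` is locally Hölder
continuous with exponent `α` on `ℝ²` (Euclidean norm), then `g = f + A` with `f`
locally Hölder continuous with exponent `α` and `A` additive. -/
theorem stmt_0 (α : ℝ) (hα0 : 0 < α) (hα1 : α ≤ 1) (g : ℝ → ℝ)
    (hg : ∀ Ω : Set (ℝ × ℝ), IsCompact Ω → ∃ K : ℝ, 0 ≤ K ∧ ∀ p ∈ Ω, ∀ q ∈ Ω,
      |(g (p.1 + p.2) - g p.1 - g p.2) - (g (q.1 + q.2) - g q.1 - g q.2)|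
        ≤ K * (Real.sqrt ((p.1 - q.1) ^ 2 + (p.2 - q.2) ^ 2)) ^ α) :
    ∃ f A : ℝ → ℝ,
      (∀ Ω : Set ℝ, IsCompact Ω → ∃ K : ℝ, 0 ≤ K ∧ ∀ x ∈ Ω, ∀ y ∈ Ω,
        |f x - f y| ≤ K * |x - y| ^ α) ∧
      (∀ x y : ℝ, A (x + y) = A x + A y) ∧
      g = f + A := by
  classical
  set C : ℝ → ℝ → ℝ := fun x y => g (x + y) - g x - g y with hCdef
  have cocycle : ∀ x y z : ℝ, C (x + y) z = C x (y + z) + C y z - C x y := by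
    intro x y z
    simp only [hCdef]
    rw [add_assoc]
    ring
  -- continuity of C
  have hC : Continuous (fun p : ℝ × ℝ => C p.1 p.2) := by
    rw [continuous_iff_continuousAt]
    intro p
    obtain ⟨K, hK0, hK⟩ := hg (Metric.closedBall p 1) (isCompact_closedBall p 1)
    have hb : Tendsto (fun q : ℝ × ℝ => K * Real.sqrt ((q.1 - p.1) ^ 2 + (q.2 - p.2) ^ 2) ^ α)
        (nhds p) (nhds 0) := by
      have hcont : ContinuousAt (fun q : ℝ × ℝ =>
          K * Real.sqrt ((q.1 - p.1) ^ 2 + (q.2 - p.2) ^ 2) ^ α) p := by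
        apply ContinuousAt.mul continuousAt_const
        apply ContinuousAt.comp (Real.continuousAt_rpow_const _ _ (Or.inr hα0.le))
        fun_prop
      have h0 : (fun q : ℝ × ℝ =>
          K * Real.sqrt ((q.1 - p.1) ^ 2 + (q.2 - p.2) ^ 2) ^ α) p = 0 := by
        simp [Real.zero_rpow hα0.ne']
      rw [← h0]
      exact hcont
    have hev : ∀ᶠ q in nhds p, ‖C q.1 q.2 - C p.1 p.2‖ ≤
        K * Real.sqrt ((q.1 - p.1) ^ 2 + (q.2 - p.2) ^ 2) ^ α := by
      filter_upwards [Metric.closedBall_mem_nhds p one_pos] with q hq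
      have := hK q hq p (Metric.mem_closedBall_self zero_le_one)
      simpa [hCdef, Real.norm_eq_abs] using this
    have htends := squeeze_zero_norm' hev hb
    have : Tendsto (fun q : ℝ × ℝ => C q.1 q.2) (nhds p) (nhds (C p.1 p.2)) := by
      have h2 := htends.add_const (C p.1 p.2)
      simpa using h2
    exact this
  have hCx : ∀ x : ℝ, Continuous fun t => C x t := by
    intro x
    exact hC.comp (Continuous.prodMk_right x)
  have hC1 : Continuous fun u => C u 1 := hC.comp (continuous_id.prodMk continuous_const)
  have int1 : ∀ a b : ℝ, IntervalIntegrable (fun u => C u 1) volume a b :=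
    fun a b => hC1.intervalIntegrable a b
  have intx : ∀ z a b : ℝ, IntervalIntegrable (fun t => C z t) volume a b :=
    fun z a b => (hCx z).intervalIntegrable a b
  set F0 : ℝ → ℝ := fun x => ∫ t in (0:ℝ)..1, C x t with hF0
  set φ : ℝ → ℝ := fun x => ∫ u in (0:ℝ)..x, C u 1 with hφ
  set f : ℝ → ℝ := fun x => φ x - F0 x with hf
  -- key cocycle trivialization
  have key : ∀ x y : ℝ, f (x + y) - f x - f y = C x y := by
    intro x y
    have e1 : φ (x + y) - φ x - φ y =
        (∫ s in (0:ℝ)..y, C (x + s) 1) - ∫ s in (0:ℝ)..y, C s 1 := by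
      have hadd : (∫ u in (0:ℝ)..x, C u 1) + ∫ u in x..(x + y), C u 1
          = ∫ u in (0:ℝ)..(x + y), C u 1 :=
        integral_add_adjacent_intervals (int1 0 x) (int1 x (x + y))
      have hsub : (∫ s in (0:ℝ)..y, C (x + s) 1) = ∫ u in x..(x + y), C u 1 := by
        have := integral_comp_add_left (fun u => C u 1) x (a := 0) (b := y)
        simpa using this
      have hφ1 : φ (x + y) = ∫ u in (0:ℝ)..(x + y), C u 1 := rfl
      have hφ2 : φ x = ∫ u in (0:ℝ)..x, C u 1 := rfl
      have hφ3 : φ y = ∫ u in (0:ℝ)..y, C u 1 := rfl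
      rw [hφ1, hφ2, hφ3, hsub]
      linarith [hadd]
    have e2 : F0 (x + y) - F0 x - F0 y =
        (∫ s in (0:ℝ)..y, C (x + s) 1) - (∫ s in (0:ℝ)..y, C s 1) - C x y := by
      have intyt : IntervalIntegrable (fun t => C x (y + t)) volume 0 1 :=
        ((hCx x).comp (continuous_const.add continuous_id)).intervalIntegrable 0 1
      have step1 : F0 (x + y) = (∫ t in (0:ℝ)..1, C x (y + t)) + F0 y - C x y := by
        have hcongr : (∫ t in (0:ℝ)..1, C (x + y) t)
            = ∫ t in (0:ℝ)..1, (C x (y + t) + C y t - C x y) :=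
          integral_congr (fun t _ => cocycle x y t)
        have hsplit : (∫ t in (0:ℝ)..1, (C x (y + t) + C y t - C x y))
            = (∫ t in (0:ℝ)..1, C x (y + t)) + (∫ t in (0:ℝ)..1, C y t) - C x y := by
          rw [intervalIntegral.integral_sub (intyt.add (intx y 0 1))
            (intervalIntegrable_const), intervalIntegral.integral_add intyt (intx y 0 1)]
          simp
        have hF0xy : F0 (x + y) = ∫ t in (0:ℝ)..1, C (x + y) t := rfl
        have hF0y : F0 y = ∫ t in (0:ℝ)..1, C y t := rfl
        rw [hF0xy, hcongr, hsplit, hF0y]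
      have step2 : (∫ t in (0:ℝ)..1, C x (y + t)) = ∫ s in y..(y + 1), C x s := by
        have := integral_comp_add_left (fun s => C x s) y (a := 0) (b := 1)
        simpa using this
      have step3 : (∫ s in (0:ℝ)..y, C x s) + (∫ s in y..(y + 1), C x s)
          = ∫ s in (0:ℝ)..(y + 1), C x s :=
        integral_add_adjacent_intervals (intx x 0 y) (intx x y (y + 1))
      have step4 : (∫ s in (0:ℝ)..1, C x s) + (∫ s in (1:ℝ)..(y + 1), C x s)
          = ∫ s in (0:ℝ)..(y + 1), C x s :=
        integral_add_adjacent_intervals (intx x 0 1) (intx x 1 (y + 1))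
      have step5 : (∫ s in (1:ℝ)..(y + 1), C x s) = ∫ s in (0:ℝ)..y, C x (s + 1) := by
        have := integral_comp_add_right (fun s => C x s) 1 (a := 0) (b := y)
        simpa using this.symm
      have step6 : (∫ s in (0:ℝ)..y, C x (s + 1))
          = (∫ s in (0:ℝ)..y, C x s) + (∫ s in (0:ℝ)..y, C (x + s) 1)
            - ∫ s in (0:ℝ)..y, C s 1 := by
        have hptw : ∀ s : ℝ, C x (s + 1) = C x s + C (x + s) 1 - C s 1 := by
          intro s
          have := cocycle x s 1
          linarith
        have hcongr : (∫ s in (0:ℝ)..y, C x (s + 1))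
            = ∫ s in (0:ℝ)..y, (C x s + C (x + s) 1 - C s 1) :=
          integral_congr (fun s _ => hptw s)
        have intxs : IntervalIntegrable (fun s => C (x + s) 1) volume 0 y :=
          (hC1.comp (continuous_const.add continuous_id)).intervalIntegrable 0 y
        rw [hcongr, intervalIntegral.integral_sub ((intx x 0 y).add intxs) (int1 0 y),
          intervalIntegral.integral_add (intx x 0 y) intxs]
      have hF0x : F0 x = ∫ s in (0:ℝ)..1, C x s := rfl
      rw [step1, step2, hF0x]
      linarith [step3, step4, step5, step6]
    have hfx : f (x + y) - f x - f y
        = (φ (x + y) - φ x - φ y) - (F0 (x + y) - F0 x - F0 y) := by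
      simp only [hf]; ring
    rw [hfx, e1, e2]
    ring
  -- Hölder continuity of f
  have hHolder : ∀ Ω : Set ℝ, IsCompact Ω → ∃ K : ℝ, 0 ≤ K ∧ ∀ x ∈ Ω, ∀ y ∈ Ω,
      |f x - f y| ≤ K * |x - y| ^ α := by
    intro Ω hΩ
    obtain ⟨R0, hR0⟩ := hΩ.isBounded.subset_closedBall 0
    set R : ℝ := max R0 1 with hR
    have hR1 : (1:ℝ) ≤ R := le_max_right _ _
    have hΩR : Ω ⊆ Set.Icc (-R) R := by
      intro x hx
      have hx1 := hR0 hx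
      rw [Metric.mem_closedBall, Real.dist_eq, sub_zero] at hx1
      have hx2 : |x| ≤ R := le_trans hx1 (le_max_left _ _)
      exact abs_le.mp hx2
    obtain ⟨M0, hM0b⟩ := (isCompact_Icc (a := -R) (b := R)).exists_bound_of_continuousOn
      hC1.continuousOn
    set M : ℝ := max M0 0 with hM
    have hM0 : 0 ≤ M := le_max_right _ _
    have hMb : ∀ u ∈ Set.Icc (-R) R, |C u 1| ≤ M := by
      intro u hu
      exact le_trans (hM0b u hu) (le_max_left _ _)
    obtain ⟨K, hK0, hK⟩ := hg (Set.Icc (-R) R ×ˢ Set.Icc (0:ℝ) 1)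
      (isCompact_Icc.prod isCompact_Icc)
    refine ⟨K + M * (2 * R) ^ (1 - α), by positivity, ?_⟩
    intro x hx y hy
    have hxR := hΩR hx
    have hyR := hΩR hy
    have hPnn : (0:ℝ) ≤ |x - y| ^ α := Real.rpow_nonneg (abs_nonneg _) α
    -- F0 difference
    have hF0d : |F0 x - F0 y| ≤ K * |x - y| ^ α := by
      have hsub : F0 x - F0 y = ∫ t in (0:ℝ)..1, (C x t - C y t) := by
        rw [intervalIntegral.integral_sub (intx x 0 1) (intx y 0 1)]
      have hbound : ∀ t ∈ Set.uIoc (0:ℝ) 1, ‖C x t - C y t‖ ≤ K * |x - y| ^ α := by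
        intro t ht
        rw [Set.uIoc_of_le zero_le_one] at ht
        have ht' : t ∈ Set.Icc (0:ℝ) 1 := ⟨ht.1.le, ht.2⟩
        have := hK (x, t) ⟨hxR, ht'⟩ (y, t) ⟨hyR, ht'⟩
        simpa [hCdef, Real.norm_eq_abs, sub_self, Real.sqrt_sq_eq_abs] using this
      have := intervalIntegral.norm_integral_le_of_norm_le_const hbound
      rw [hsub]
      simpa [Real.norm_eq_abs] using this
    -- φ difference
    have hφd : |φ x - φ y| ≤ M * |x - y| := by
      have hsub : φ x - φ y = ∫ u in y..x, C u 1 := by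
        have := integral_add_adjacent_intervals (int1 0 y) (int1 y x)
        have hφ1 : φ x = ∫ u in (0:ℝ)..x, C u 1 := rfl
        have hφ2 : φ y = ∫ u in (0:ℝ)..y, C u 1 := rfl
        rw [hφ1, hφ2]
        linarith [this]
      have hbound : ∀ u ∈ Set.uIoc y x, ‖C u 1‖ ≤ M := by
        intro u hu
        have hmem : u ∈ Set.uIcc y x := Set.uIoc_subset_uIcc hu
        have hsubset : Set.uIcc y x ⊆ Set.Icc (-R) R := Set.uIcc_subset_Icc hyR hxR
        exact hMb u (hsubset hmem)
      have := intervalIntegral.norm_integral_le_of_norm_le_const hbound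
      rw [hsub]
      simpa [Real.norm_eq_abs] using this
    -- |x - y| ≤ (2R)^(1-α) * |x-y|^α
    have habs : |x - y| ≤ 2 * R := by
      have h1 : |x| ≤ R := abs_le.mpr hxR
      have h2 : |y| ≤ R := abs_le.mpr hyR
      calc |x - y| ≤ |x| + |y| := abs_sub _ _
        _ ≤ 2 * R := by linarith
    have hpow : |x - y| ≤ (2 * R) ^ (1 - α) * |x - y| ^ α := by
      rcases eq_or_ne x y with h | h
      · simp [h, Real.zero_rpow hα0.ne']
      · have h0 : 0 < |x - y| := abs_pos.mpr (sub_ne_zero.mpr h)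
        have hsplit : |x - y| = |x - y| ^ (1 - α) * |x - y| ^ α := by
          rw [← Real.rpow_add h0]
          simp
        have hle : |x - y| ^ (1 - α) ≤ (2 * R) ^ (1 - α) :=
          Real.rpow_le_rpow (abs_nonneg _) habs (by linarith)
        calc |x - y| = |x - y| ^ (1 - α) * |x - y| ^ α := hsplit
          _ ≤ (2 * R) ^ (1 - α) * |x - y| ^ α := mul_le_mul_of_nonneg_right hle hPnn
    have hφd2 : |φ x - φ y| ≤ M * ((2 * R) ^ (1 - α) * |x - y| ^ α) :=
      le_trans hφd (mul_le_mul_of_nonneg_left hpow hM0)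
    have htri : |f x - f y| ≤ |φ x - φ y| + |F0 x - F0 y| := by
      have : f x - f y = (φ x - φ y) - (F0 x - F0 y) := by simp only [hf]; ring
      rw [this]
      exact abs_sub _ _
    have hring : (K + M * (2 * R) ^ (1 - α)) * |x - y| ^ α
        = K * |x - y| ^ α + M * ((2 * R) ^ (1 - α) * |x - y| ^ α) := by ring
    linarith
  refine ⟨f, fun x => g x - f x, hHolder, ?_, ?_⟩
  · intro x y
    have := key x y
    simp only [hCdef] at this
    show g (x + y) - f (x + y) = (g x - f x) + (g y - f y)
    linarith
  · funext x
    simp [Pi.add_apply]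
end

section
/- Suppose g : ℝ → ℝ is a function such that F(x,y) = g(x+y) − g(x) − g(y) defines a continuous function F : ℝ² → ℝ. Then there exist a continuous function f : ℝ → ℝ and an additive function A : ℝ → ℝ (A(x+y) = A(x) + A(y) for all x, y) such that g = f + A, and moreover for every M ≥ 1 and every δ with 0 ≤ δ < 1/2 one has ω(f; δ; [−M,M]) ≤ 3·ω(F; δ; [−M,M]²). -/
/-- Modulus of continuity of `f : ℝ → ℝ` on `Ω` with increment `δ`. -/
noncomputable def omega1 (f : ℝ → ℝ) (δ : ℝ) (Ω : Set ℝ) : ℝ :=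
  sSup {d : ℝ | ∃ x ∈ Ω, ∃ y ∈ Ω, |x - y| ≤ δ ∧ d = |f x - f y|}

/-- Modulus of continuity of `F : ℝ² → ℝ` on `Ω` with increment `δ`
(Euclidean distance on `ℝ²`). -/
noncomputable def omega2 (F : ℝ × ℝ → ℝ) (δ : ℝ) (Ω : Set (ℝ × ℝ)) : ℝ :=
  sSup {d : ℝ | ∃ p ∈ Ω, ∃ q ∈ Ω,
    Real.sqrt ((p.1 - q.1) ^ 2 + (p.2 - q.2) ^ 2) ≤ δ ∧ d = |F p - F q|}


open intervalIntegral MeasureTheory Set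

namespace Stmt1Aux

/-- The Cauchy difference, curried. -/
def Fc (g : ℝ → ℝ) (x y : ℝ) : ℝ := g (x + y) - g x - g y

noncomputable def mI (g : ℝ → ℝ) (x : ℝ) : ℝ := ∫ t in (0:ℝ)..1, Fc g x t
noncomputable def Ph (g : ℝ → ℝ) (x : ℝ) : ℝ := ∫ u in (0:ℝ)..x, Fc g 1 u
noncomputable def ff (g : ℝ → ℝ) (x : ℝ) : ℝ :=
  Ph g x - mI g x - (Ph g 1 - mI g 1 + Fc g 0 1) * x

variable {g : ℝ → ℝ}

lemma cocycle (g : ℝ → ℝ) (x y t : ℝ) :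
    Fc g (x + y) t = Fc g x (y + t) + Fc g y t - Fc g x y := by
  simp only [Fc]; ring_nf

lemma shiftid (g : ℝ → ℝ) (x u : ℝ) :
    Fc g x (u + 1) = Fc g 1 (x + u) - Fc g 1 u + Fc g x u := by
  simp only [Fc]; ring_nf

lemma contFc (hF : Continuous fun p : ℝ × ℝ => Fc g p.1 p.2) (x : ℝ) :
    Continuous (Fc g x) :=
  hF.comp (continuous_const.prodMk continuous_id)

lemma contFc' (hF : Continuous fun p : ℝ × ℝ => Fc g p.1 p.2) (y : ℝ) :
    Continuous (fun x => Fc g x y) :=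
  hF.comp (continuous_id.prodMk continuous_const)

lemma contff (hF : Continuous fun p : ℝ × ℝ => Fc g p.1 p.2) : Continuous (ff g) := by
  have h1 : Continuous (Ph g) :=
    intervalIntegral.continuous_primitive (fun a b => ((contFc hF 1)).intervalIntegrable a b) 0
  have h2 : Continuous (mI g) :=
    intervalIntegral.continuous_parametric_intervalIntegral_of_continuous' (f := Fc g) (by exact hF) 0 1
  exact (h1.sub h2).sub (continuous_const.mul continuous_id)

lemma hdelta (hF : Continuous fun p : ℝ × ℝ => Fc g p.1 p.2) (x y : ℝ) :
    ff g (x + y) = ff g x + ff g y + Fc g x y := by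
  have hint : ∀ (z a b : ℝ), IntervalIntegrable (Fc g z) volume a b :=
    fun z a b => (contFc hF z).intervalIntegrable a b
  have hintshift : ∀ (z c a b : ℝ), IntervalIntegrable (fun t => Fc g z (c + t)) volume a b :=
    fun z c a b => ((contFc hF z).comp (continuous_const.add continuous_id)).intervalIntegrable a b
  have hintshift' : ∀ (z a b : ℝ), IntervalIntegrable (fun t => Fc g z (t + 1)) volume a b :=
    fun z a b => ((contFc hF z).comp (continuous_id.add continuous_const)).intervalIntegrable a b
  have A1 : mI g (x + y) = (∫ t in (0:ℝ)..1, Fc g x (y + t)) + mI g y - Fc g x y := by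
    unfold mI
    rw [show (∫ t in (0:ℝ)..1, Fc g (x+y) t)
        = ∫ t in (0:ℝ)..1, (Fc g x (y+t) + Fc g y t - Fc g x y) from
      intervalIntegral.integral_congr (fun t _ => cocycle g x y t)]
    rw [intervalIntegral.integral_sub ((hintshift x y 0 1).add (hint y 0 1))
        intervalIntegrable_const,
      intervalIntegral.integral_add (hintshift x y 0 1) (hint y 0 1),
      intervalIntegral.integral_const]
    simp
  have A2 : (∫ t in (0:ℝ)..1, Fc g x (y + t)) = ∫ u in y..(y+1), Fc g x u := by
    rw [intervalIntegral.integral_comp_add_left (Fc g x) y, add_zero]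
  have A4 : (∫ u in (0:ℝ)..y, Fc g x (u + 1)) = ∫ u in (1:ℝ)..(y+1), Fc g x u := by
    rw [intervalIntegral.integral_comp_add_right (Fc g x) 1, zero_add]
  have adjx : ∀ a b c : ℝ,
      (∫ u in a..b, Fc g x u) + (∫ u in b..c, Fc g x u) = ∫ u in a..c, Fc g x u :=
    fun a b c => intervalIntegral.integral_add_adjacent_intervals (hint x a b) (hint x b c)
  have adj1 : ∀ a b c : ℝ,
      (∫ u in a..b, Fc g 1 u) + (∫ u in b..c, Fc g 1 u) = ∫ u in a..c, Fc g 1 u :=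
    fun a b c => intervalIntegral.integral_add_adjacent_intervals (hint 1 a b) (hint 1 b c)
  have A5 : (∫ u in (0:ℝ)..y, Fc g x (u + 1))
      = (∫ u in (0:ℝ)..y, Fc g 1 (x + u)) - (∫ u in (0:ℝ)..y, Fc g 1 u)
        + (∫ u in (0:ℝ)..y, Fc g x u) := by
    rw [show (∫ u in (0:ℝ)..y, Fc g x (u + 1))
        = ∫ u in (0:ℝ)..y, (Fc g 1 (x+u) - Fc g 1 u + Fc g x u) from
      intervalIntegral.integral_congr (fun u _ => shiftid g x u)]
    rw [intervalIntegral.integral_add ((hintshift 1 x 0 y).sub (hint 1 0 y)) (hint x 0 y),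
      intervalIntegral.integral_sub (hintshift 1 x 0 y) (hint 1 0 y)]
  have A6 : (∫ u in (0:ℝ)..y, Fc g 1 (x + u)) = ∫ v in x..(x+y), Fc g 1 v := by
    rw [intervalIntegral.integral_comp_add_left (Fc g 1) x, add_zero]
  have E1 : (∫ u in (0:ℝ)..y, Fc g x u) + (∫ u in y..(y+1), Fc g x u)
      = ∫ u in (0:ℝ)..(y+1), Fc g x u := adjx 0 y (y+1)
  have E2 : (∫ u in (0:ℝ)..1, Fc g x u) + (∫ u in (1:ℝ)..(y+1), Fc g x u)
      = ∫ u in (0:ℝ)..(y+1), Fc g x u := adjx 0 1 (y+1)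
  have E3 : Ph g x + (∫ v in x..(x+y), Fc g 1 v) = Ph g (x+y) := adj1 0 x (x+y)
  have hm : mI g x = ∫ u in (0:ℝ)..1, Fc g x u := rfl
  have hPh : Ph g y = ∫ u in (0:ℝ)..y, Fc g 1 u := rfl
  have main : mI g (x+y) - mI g x - mI g y
      = Ph g (x+y) - Ph g x - Ph g y - Fc g x y := by
    rw [A1, A2, hm, hPh]
    linarith [E1, E2, E3, A4, A5, A6]
  unfold ff
  linear_combination -main

lemma keyid (hF : Continuous fun p : ℝ × ℝ => Fc g p.1 p.2) (h : ℝ) :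
    ff g h + (∫ a in (0:ℝ)..1, Fc g a h) = h * ff g 1 + ∫ u in (0:ℝ)..h, Fc g u 1 := by
  have contf := contff hF
  have hintf : ∀ a b : ℝ, IntervalIntegrable (ff g) volume a b :=
    fun a b => contf.intervalIntegrable a b
  have adjf : ∀ a b c : ℝ,
      (∫ u in a..b, ff g u) + (∫ u in b..c, ff g u) = ∫ u in a..c, ff g u :=
    fun a b c => intervalIntegral.integral_add_adjacent_intervals (hintf a b) (hintf b c)
  have B1 : (∫ a in (0:ℝ)..1, ff g (a + h)) = ∫ a in h..(1+h), ff g a := by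
    rw [intervalIntegral.integral_comp_add_right (ff g) h, zero_add, add_comm (1:ℝ) h]
  have B2 : (∫ a in (0:ℝ)..1, ff g (a + h))
      = (∫ a in (0:ℝ)..1, ff g a) + ff g h + (∫ a in (0:ℝ)..1, Fc g a h) := by
    rw [show (∫ a in (0:ℝ)..1, ff g (a + h))
        = ∫ a in (0:ℝ)..1, (ff g a + ff g h + Fc g a h) from
      intervalIntegral.integral_congr (fun a _ => hdelta hF a h)]
    rw [intervalIntegral.integral_add ((hintf 0 1).add intervalIntegrable_const)
        ((contFc' hF h).intervalIntegrable 0 1),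
      intervalIntegral.integral_add (hintf 0 1) intervalIntegrable_const,
      intervalIntegral.integral_const]
    simp
  have B3 : (∫ a in h..(1+h), ff g a)
      = (∫ a in (0:ℝ)..(1+h), ff g a) - ∫ a in (0:ℝ)..h, ff g a := by
    have := adjf 0 h (1+h); linarith
  have B4 : (∫ u in (0:ℝ)..h, ff g (u + 1)) = ∫ u in (1:ℝ)..(1+h), ff g u := by
    rw [intervalIntegral.integral_comp_add_right (ff g) 1, zero_add, add_comm h (1:ℝ)]
  have B5 : (∫ u in (0:ℝ)..h, ff g (u + 1))
      = (∫ u in (0:ℝ)..h, ff g u) + h * ff g 1 + (∫ u in (0:ℝ)..h, Fc g u 1) := by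
    rw [show (∫ u in (0:ℝ)..h, ff g (u + 1))
        = ∫ u in (0:ℝ)..h, (ff g u + ff g 1 + Fc g u 1) from
      intervalIntegral.integral_congr (fun u _ => hdelta hF u 1)]
    rw [intervalIntegral.integral_add ((hintf 0 h).add intervalIntegrable_const)
        ((contFc' hF 1).intervalIntegrable 0 h),
      intervalIntegral.integral_add (hintf 0 h) intervalIntegrable_const,
      intervalIntegral.integral_const]
    simp [mul_comm]
  have B6 : (∫ u in (1:ℝ)..(1+h), ff g u)
      = (∫ u in (0:ℝ)..(1+h), ff g u) - ∫ u in (0:ℝ)..1, ff g u := by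
    have := adjf 0 1 (1+h); linarith
  linarith [B1, B2, B3, B4, B5, B6]

lemma hf1 (g : ℝ → ℝ) : ff g 1 = - Fc g 0 1 := by unfold ff; ring

lemma hdiff (hF : Continuous fun p : ℝ × ℝ => Fc g p.1 p.2) (h : ℝ) :
    ff g h - ff g 0 = (∫ u in (0:ℝ)..h, (Fc g u 1 - Fc g 0 1))
      + ∫ a in (0:ℝ)..1, (Fc g a 0 - Fc g a h) := by
  have k1 := keyid hF h
  have k0 := keyid hF 0
  rw [intervalIntegral.integral_same, zero_mul] at k0
  rw [hf1 g] at k1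
  have c1 : (∫ u in (0:ℝ)..h, (Fc g u 1 - Fc g 0 1))
      = (∫ u in (0:ℝ)..h, Fc g u 1) - h * Fc g 0 1 := by
    rw [intervalIntegral.integral_sub ((contFc' hF 1).intervalIntegrable 0 h)
      intervalIntegrable_const, intervalIntegral.integral_const]
    simp [mul_comm]
  have c2 : (∫ a in (0:ℝ)..1, (Fc g a 0 - Fc g a h))
      = (∫ a in (0:ℝ)..1, Fc g a 0) - ∫ a in (0:ℝ)..1, Fc g a h := by
    rw [intervalIntegral.integral_sub ((contFc' hF 0).intervalIntegrable 0 1)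
      ((contFc' hF h).intervalIntegrable 0 1)]
  linear_combination k1 - k0 - c1 - c2

end Stmt1Aux

open Stmt1Aux in
/-- If `F(x,y) = g(x+y) - g(x) - g(y)` is continuous on `ℝ²`, then `g = f + A`
with `f` continuous and `A` additive, and moreover
`ω(f; δ; [-M,M]) ≤ 3 ω(F; δ; [-M,M]²)` for all `M ≥ 1`, `0 ≤ δ < 1/2`. -/

theorem stmt_1 (g : ℝ → ℝ)
    (hF : Continuous (fun p : ℝ × ℝ => g (p.1 + p.2) - g p.1 - g p.2)) :
    ∃ f A : ℝ → ℝ, Continuous f ∧ (∀ x y : ℝ, A (x + y) = A x + A y) ∧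
      g = f + A ∧
      ∀ M : ℝ, 1 ≤ M → ∀ δ : ℝ, 0 ≤ δ → δ < 1 / 2 →
        omega1 f δ (Set.Icc (-M) M)
          ≤ 3 * omega2 (fun p : ℝ × ℝ => g (p.1 + p.2) - g p.1 - g p.2) δ
              (Set.Icc (-M) M ×ˢ Set.Icc (-M) M) := by
  have hF' : Continuous fun p : ℝ × ℝ => Fc g p.1 p.2 := hF
  refine ⟨ff g, fun x => g x - ff g x, contff hF', ?_, ?_, ?_⟩
  · intro x y
    have := hdelta hF' x y
    simp only [Fc] at this
    show g (x + y) - ff g (x + y) = (g x - ff g x) + (g y - ff g y)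
    linarith
  · funext x; simp
  · intro M hM δ hδ0 hδhalf
    simp only [omega1, omega2]
    -- boundedness of the ω₂ index set
    obtain ⟨C, hC⟩ := (isCompact_Icc.prod isCompact_Icc).exists_bound_of_continuousOn
      (hF.continuousOn (s := Set.Icc (-M) M ×ˢ Set.Icc (-M) M))
    have hbdd : BddAbove {d : ℝ | ∃ p ∈ Set.Icc (-M) M ×ˢ Set.Icc (-M) M,
        ∃ q ∈ Set.Icc (-M) M ×ˢ Set.Icc (-M) M,
        Real.sqrt ((p.1 - q.1) ^ 2 + (p.2 - q.2) ^ 2) ≤ δ ∧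
        d = |(fun p : ℝ × ℝ => g (p.1 + p.2) - g p.1 - g p.2) p
              - (fun p : ℝ × ℝ => g (p.1 + p.2) - g p.1 - g p.2) q|} := by
      refine ⟨2 * C, ?_⟩
      rintro d ⟨p, hp, q, hq, -, rfl⟩
      have h1 := hC p hp
      have h2 := hC q hq
      rw [Real.norm_eq_abs] at h1 h2
      calc |(g (p.1 + p.2) - g p.1 - g p.2) - (g (q.1 + q.2) - g q.1 - g q.2)|
          ≤ |g (p.1 + p.2) - g p.1 - g p.2| + |g (q.1 + q.2) - g q.1 - g q.2| :=
            abs_sub _ _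
        _ ≤ 2 * C := by linarith
    set W : ℝ := sSup {d : ℝ | ∃ p ∈ Set.Icc (-M) M ×ˢ Set.Icc (-M) M,
        ∃ q ∈ Set.Icc (-M) M ×ˢ Set.Icc (-M) M,
        Real.sqrt ((p.1 - q.1) ^ 2 + (p.2 - q.2) ^ 2) ≤ δ ∧
        d = |(fun p : ℝ × ℝ => g (p.1 + p.2) - g p.1 - g p.2) p
              - (fun p : ℝ × ℝ => g (p.1 + p.2) - g p.1 - g p.2) q|} with hWdef
    have hM0 : (0:ℝ) ≤ M := by linarith
    have hmemIcc : ∀ z : ℝ, |z| ≤ M → z ∈ Set.Icc (-M) M := by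
      intro z hz
      rw [Set.mem_Icc]
      constructor <;> [linarith [neg_abs_le z]; linarith [le_abs_self z]]
    have hkey : ∀ a b c d : ℝ, |a| ≤ M → |b| ≤ M → |c| ≤ M → |d| ≤ M →
        Real.sqrt ((a - c) ^ 2 + (b - d) ^ 2) ≤ δ → |Fc g a b - Fc g c d| ≤ W := by
      intro a b c d ha hb hc hd hs
      exact le_csSup hbdd ⟨(a, b), ⟨hmemIcc a ha, hmemIcc b hb⟩,
        (c, d), ⟨hmemIcc c hc, hmemIcc d hd⟩, hs, rfl⟩
    have hW0 : (0:ℝ) ≤ W := by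
      refine le_csSup hbdd ⟨(0, 0), ⟨hmemIcc 0 (by simpa using hM0), hmemIcc 0 (by simpa using hM0)⟩,
        (0, 0), ⟨hmemIcc 0 (by simpa using hM0), hmemIcc 0 (by simpa using hM0)⟩, ?_, ?_⟩ <;> simp [hδ0]
    refine Real.sSup_le ?_ (by linarith)
    rintro d ⟨x, hx, y, hy, hxy, rfl⟩
    rw [Set.mem_Icc] at hx hy
    have hxM : |x| ≤ M := abs_le.mpr hx
    have hyM : |y| ≤ M := abs_le.mpr hy
    set h : ℝ := x - y with hh
    have hhδ : |h| ≤ δ := hxy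
    have hhM : |h| ≤ M := by linarith
    have h1M : |(1:ℝ)| ≤ M := by rw [abs_one]; exact hM
    have h0M : |(0:ℝ)| ≤ M := by simpa using hM0
    -- decomposition
    have dec : ff g x - ff g y = (ff g h - ff g 0) + (Fc g y h - Fc g y 0) := by
      have h1 := hdelta hF' y h
      rw [show y + h = x by rw [hh]; ring] at h1
      have h2 : Fc g y 0 = Fc g 0 0 := by simp [Fc]
      have h3 := hdelta hF' 0 0
      rw [add_zero] at h3
      linarith
    -- bound on middle term
    have T3 : |Fc g y h - Fc g y 0| ≤ W := by
      refine hkey y h y 0 hyM hhM hyM h0M ?_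
      rw [show (y - y) ^ 2 + (h - 0) ^ 2 = h ^ 2 by ring, Real.sqrt_sq_eq_abs]
      exact hhδ
    -- bound on |ff h - ff 0|
    have habs : ∀ u ∈ Set.uIoc (0:ℝ) h, |u| ≤ |h| := by
      intro u hu
      rcases Set.mem_uIoc.mp hu with ⟨h1, h2⟩ | ⟨h1, h2⟩
      · rw [abs_le]; exact ⟨by linarith [abs_nonneg h], by linarith [le_abs_self h]⟩
      · rw [abs_le]; exact ⟨by linarith [neg_abs_le h], by linarith [abs_nonneg h]⟩
    have T1 : |∫ u in (0:ℝ)..h, (Fc g u 1 - Fc g 0 1)| ≤ W * δ := by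
      have hb : ∀ u ∈ Set.uIoc (0:ℝ) h, ‖Fc g u 1 - Fc g 0 1‖ ≤ W := by
        intro u hu
        rw [Real.norm_eq_abs]
        have huh : |u| ≤ |h| := habs u hu
        refine hkey u 1 0 1 (by linarith) h1M h0M h1M ?_
        rw [show (u - 0) ^ 2 + ((1:ℝ) - 1) ^ 2 = u ^ 2 by ring, Real.sqrt_sq_eq_abs]
        linarith
      have := intervalIntegral.norm_integral_le_of_norm_le_const hb
      rw [Real.norm_eq_abs] at this
      calc |∫ u in (0:ℝ)..h, (Fc g u 1 - Fc g 0 1)| ≤ W * |h - 0| := this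
        _ ≤ W * δ := by
            rw [sub_zero]
            exact mul_le_mul_of_nonneg_left hhδ hW0
    have T2 : |∫ a in (0:ℝ)..1, (Fc g a 0 - Fc g a h)| ≤ W := by
      have hb : ∀ a ∈ Set.uIoc (0:ℝ) 1, ‖Fc g a 0 - Fc g a h‖ ≤ W := by
        intro a ha
        rw [Set.uIoc_of_le (by norm_num : (0:ℝ) ≤ 1), Set.mem_Ioc] at ha
        rw [Real.norm_eq_abs]
        have haM : |a| ≤ M := by rw [abs_le]; exact ⟨by linarith, by linarith⟩
        refine hkey a 0 a h haM h0M haM hhM ?_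
        rw [show (a - a) ^ 2 + ((0:ℝ) - h) ^ 2 = h ^ 2 by ring, Real.sqrt_sq_eq_abs]
        exact hhδ
      have := intervalIntegral.norm_integral_le_of_norm_le_const hb
      rw [Real.norm_eq_abs] at this
      calc |∫ a in (0:ℝ)..1, (Fc g a 0 - Fc g a h)| ≤ W * |1 - 0| := this
        _ = W := by norm_num
    have Tmid : |ff g h - ff g 0| ≤ W * δ + W := by
      rw [hdiff hF' h]
      calc |(∫ u in (0:ℝ)..h, (Fc g u 1 - Fc g 0 1))
            + ∫ a in (0:ℝ)..1, (Fc g a 0 - Fc g a h)|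
          ≤ |∫ u in (0:ℝ)..h, (Fc g u 1 - Fc g 0 1)|
            + |∫ a in (0:ℝ)..1, (Fc g a 0 - Fc g a h)| := abs_add_le _ _
        _ ≤ W * δ + W := add_le_add T1 T2
    have hWδ : W * δ ≤ W * (1/2) := by
      apply mul_le_mul_of_nonneg_left (le_of_lt hδhalf) hW0
    calc |ff g x - ff g y| ≤ |ff g h - ff g 0| + |Fc g y h - Fc g y 0| := by
          rw [dec]; exact abs_add_le _ _
      _ ≤ (W * δ + W) + W := add_le_add Tmid T3
      _ ≤ 3 * W := by linarith
end

section
/- Assume a function F ∈ C(ℝ²) has the form F(x,y) = g(x+y) − g(x) − g(y), where g : ℝ → ℝ is an arbitrary function. Then for every rational δ ∈ (0, 1/2) and every real M ≥ 1 the following inequality holds: ω_ℚ(g; δ; [−M,M]) ≤ 2δ·|g(1) − g(0)| + 3·ω(F; δ; [−M,M]²). -/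
/-!
With `D(x, y) = F(x, y) - F(x, 0) = (g(x + y) - g(x)) - (g(y) - g(0))` we have
`|D(x, y)| ≤ ω(F; δ)` for `x ∈ [-M, M]` and `0 ≤ y ≤ δ`, since `(x, y)` and `(x, 0)` are
`δ`-close. For `r = p / q` and `s = 1 / q`, the telescoping sums of `g(n s)` over the shifts by `p`
and by `q` coincide, which writes `q (g(r) - g(0)) - p (g(1) - g(0))` as a combination of `p + q`
values of `D`. Hence `|g(r) - g(0)| ≤ r |g(1) - g(0)| + (r + 1) ω`, and for rationals `b ≤ a`
the increment `g(a) - g(b)` differs from `g(a - b) - g(0)` by one more value of `D`.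
-/

open Finset Set

lemma omega1_le {f : ℝ → ℝ} {δ c : ℝ} {Ω : Set ℝ} (hc : 0 ≤ c)
    (h : ∀ x ∈ Ω, ∀ y ∈ Ω, |x - y| ≤ δ → |f x - f y| ≤ c) : omega1 f δ Ω ≤ c :=
  Real.sSup_le (by rintro _ ⟨x, hx, y, hy, hxy, rfl⟩; exact h x hx y hy hxy) hc

lemma abs_sub_le_omega2 {F : ℝ × ℝ → ℝ} {δ : ℝ} {Ω : Set (ℝ × ℝ)} (hF : ContinuousOn F Ω)
    (hΩ : IsCompact Ω) {p q : ℝ × ℝ} (hp : p ∈ Ω) (hq : q ∈ Ω)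
    (hpq : Real.sqrt ((p.1 - q.1) ^ 2 + (p.2 - q.2) ^ 2) ≤ δ) :
    |F p - F q| ≤ omega2 F δ Ω := by
  obtain ⟨C, hC⟩ := hΩ.exists_bound_of_continuousOn hF
  refine le_csSup ⟨2 * C, ?_⟩ ⟨p, hp, q, hq, hpq, rfl⟩
  rintro _ ⟨p, hp, q, hq, -, rfl⟩
  have hCp := hC p hp
  have hCq := hC q hq
  rw [Real.norm_eq_abs] at hCp hCq
  linarith [abs_sub (F p) (F q)]

lemma sum_range_add_sub_comm {G : Type*} [AddCommGroup G] (f : ℕ → G) (p q : ℕ) :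
    ∑ j ∈ range q, (f (p + j) - f j) = ∑ k ∈ range p, (f (q + k) - f k) := by
  rw [sum_sub_distrib, sum_sub_distrib, ← sum_range_add_sub_sum_range,
    ← sum_range_add_sub_sum_range, add_comm q p]
  abel

lemma abs_sum_range_le {f : ℕ → ℝ} {n : ℕ} {c : ℝ} (h : ∀ i < n, |f i| ≤ c) :
    |∑ i ∈ range n, f i| ≤ n * c := by
  refine (abs_sum_le_sum_abs _ _).trans ?_
  simpa using sum_le_card_nsmul _ _ c fun i hi => h i (mem_range.1 hi)

def cauchyDiff (g : ℝ → ℝ) (x y : ℝ) : ℝ := g (x + y) - g x - g y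

lemma cauchyDiff_sub_cauchyDiff_zero (g : ℝ → ℝ) (x y : ℝ) :
    cauchyDiff g x y - cauchyDiff g x 0 = (g (x + y) - g x) - (g y - g 0) := by
  simp only [cauchyDiff, add_zero]; ring

lemma natCast_mul_sub_natCast_mul_eq_sum_cauchyDiff (g : ℝ → ℝ) (s : ℝ) (p q : ℕ) :
    q * (g (p * s) - g 0) - p * (g (q * s) - g 0)
      = ∑ k ∈ range p, (cauchyDiff g (q * s) (k * s) - cauchyDiff g (q * s) 0)
        - ∑ j ∈ range q, (cauchyDiff g (j * s) (p * s) - cauchyDiff g (j * s) 0) := by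
  have h := sum_range_add_sub_comm (fun n : ℕ => g (n * s)) p q
  simp only [Nat.cast_add, add_mul] at h
  simp only [cauchyDiff_sub_cauchyDiff_zero, sum_sub_distrib, sum_const, card_range,
    nsmul_eq_mul, add_comm _ ((p : ℝ) * s)] at h ⊢
  linarith

lemma abs_sub_le_of_abs_cauchyDiff_sub_le {g : ℝ → ℝ} {ω : ℝ} (p q : ℕ) (hq : 0 < q)
    (hD : ∀ x ∈ Icc (0 : ℝ) 1, ∀ y ∈ Icc (0 : ℝ) (p / q),
      |cauchyDiff g x y - cauchyDiff g x 0| ≤ ω) :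
    |g (p / q) - g 0| ≤ p / q * |g 1 - g 0| + (p / q + 1) * ω := by
  have hq' : (0 : ℝ) < q := by exact_mod_cast hq
  have hsum := natCast_mul_sub_natCast_mul_eq_sum_cauchyDiff g (q : ℝ)⁻¹ p q
  simp only [mul_inv_cancel₀ hq'.ne', ← div_eq_mul_inv] at hsum
  have hE₁ : |∑ k ∈ range p, (cauchyDiff g 1 (k / q) - cauchyDiff g 1 0)| ≤ p * ω :=
    abs_sum_range_le fun k hk => hD 1 (by simp) _ ⟨by positivity, by gcongr⟩
  have hE₂ : |∑ j ∈ range q, (cauchyDiff g (j / q) (p / q) - cauchyDiff g (j / q) 0)| ≤ q * ω :=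
    abs_sum_range_le fun j hj => hD _
      ⟨by positivity, by rw [div_le_one hq']; exact_mod_cast hj.le⟩ _ ⟨by positivity, le_rfl⟩
  have hq_mul : q * |g (p / q) - g 0| ≤ p * |g 1 - g 0| + (p + q) * ω := by
    calc q * |g (p / q) - g 0|
        = |p * (g 1 - g 0) + (q * (g (p / q) - g 0) - p * (g 1 - g 0))| := by
          rw [add_sub_cancel, abs_mul, abs_of_pos hq']
      _ ≤ |p * (g 1 - g 0)| + (p * ω + q * ω) := by
          rw [hsum]
          exact (abs_add_le _ _).trans
            (add_le_add_right ((abs_sub _ _).trans (add_le_add hE₁ hE₂)) _)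
      _ = p * |g 1 - g 0| + (p + q) * ω := by rw [abs_mul, Nat.abs_cast]; ring
  rw [← le_div_iff₀' hq'] at hq_mul
  exact hq_mul.trans_eq (by field_simp)

lemma Rat.exists_cast_eq_natCast_div {r : ℚ} (hr : 0 ≤ r) :
    ∃ p q : ℕ, 0 < q ∧ (r : ℝ) = p / q :=
  ⟨r.num.toNat, r.den, r.pos, by
    rw [Rat.cast_def, ← Int.toNat_of_nonneg (Rat.num_nonneg.2 hr)]; rfl⟩

/-- If `F(x,y) = g(x+y) - g(x) - g(y)` is continuous on `ℝ²`, then for every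
rational `δ ∈ (0, 1/2)` and every `M ≥ 1`,
`ω_ℚ(g; δ; [-M,M]) ≤ 2δ|g(1) - g(0)| + 3 ω(F; δ; [-M,M]²)`. -/
theorem stmt_2 (g : ℝ → ℝ)
    (hF : Continuous (fun p : ℝ × ℝ => g (p.1 + p.2) - g p.1 - g p.2))
    (δ : ℚ) (hδ0 : 0 < δ) (hδ : (δ : ℝ) < 1 / 2) (M : ℝ) (hM : 1 ≤ M) :
    omega1 g (δ : ℝ) (Set.Icc (-M) M ∩ Set.range ((↑) : ℚ → ℝ))
      ≤ 2 * (δ : ℝ) * |g 1 - g 0|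
        + 3 * omega2 (fun p : ℝ × ℝ => g (p.1 + p.2) - g p.1 - g p.2) (δ : ℝ)
            (Set.Icc (-M) M ×ˢ Set.Icc (-M) M) := by
  set ω := omega2 (fun p : ℝ × ℝ => g (p.1 + p.2) - g p.1 - g p.2) δ (Icc (-M) M ×ˢ Icc (-M) M)
  have hδ₀ : (0 : ℝ) < δ := by exact_mod_cast hδ0
  have hD : ∀ x ∈ Icc (-M) M, ∀ y ∈ Icc (0 : ℝ) δ,
      |cauchyDiff g x y - cauchyDiff g x 0| ≤ ω := fun x hx y hy =>
    abs_sub_le_omega2 hF.continuousOn (isCompact_Icc.prod isCompact_Icc)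
      (p := (x, y)) (q := (x, 0)) ⟨hx, by constructor <;> linarith [hy.1, hy.2]⟩
      ⟨hx, by constructor <;> linarith⟩ (by simp [Real.sqrt_sq_eq_abs, abs_of_nonneg hy.1, hy.2])
  have hω : 0 ≤ ω := (abs_nonneg _).trans (hD 0 ⟨by linarith, by linarith⟩ 0 ⟨le_rfl, hδ₀.le⟩)
  refine omega1_le (by positivity) ?_
  rintro _ ⟨ha, a, rfl⟩ _ ⟨hb, b, rfl⟩ hab
  wlog hba : b ≤ a generalizing a b
  · rw [abs_sub_comm] at hab ⊢
    exact this b hb a ha hab (not_le.1 hba).le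
  obtain ⟨p, q, hq, hpq⟩ := Rat.exists_cast_eq_natCast_div (sub_nonneg.2 hba)
  push_cast at hpq
  have hr : (a - b : ℝ) ∈ Icc 0 (δ : ℝ) :=
    ⟨sub_nonneg.2 (by exact_mod_cast hba), (le_abs_self _).trans hab⟩
  have hgr : |g (a - b) - g 0| ≤ (a - b) * |g 1 - g 0| + (a - b + 1) * ω := by
    rw [hpq] at hr ⊢
    exact abs_sub_le_of_abs_cauchyDiff_sub_le p q hq fun x hx y hy =>
      hD x (Icc_subset_Icc (by linarith) hM hx) y ⟨hy.1, hy.2.trans hr.2⟩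
  calc |g a - g b|
      = |(cauchyDiff g b (a - b) - cauchyDiff g b 0) + (g (a - b) - g 0)| := by
        rw [cauchyDiff_sub_cauchyDiff_zero, add_sub_cancel, sub_add_cancel]
    _ ≤ ω + ((a - b) * |g 1 - g 0| + (a - b + 1) * ω) :=
        (abs_add_le _ _).trans (add_le_add (hD b hb _ hr) hgr)
    _ ≤ 2 * δ * |g 1 - g 0| + 3 * ω := by nlinarith [hr.1, hr.2, abs_nonneg (g 1 - g 0)]
end

section
/- Let h : ℝ → ℝ satisfy h(0) = 0 and define G(x,y) = h(x+y) − h(x) − h(y). Let p, n be positive integers with p/n ∈ (0, 1/2), set m₀ = ⌊n/p⌋ and p₁ = n − m₀·p. Then h(p/n) = h(1)/m₀ − (1/m₀)·[ Σ_{j=1}^{m₀−1} G(p/n, j·p/n) + G(p₁/n, 1 − p₁/n) ] − h(p₁/n)/m₀. -/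
/-! With `a = p/n`, the sum of double differences telescopes to `h (m₀ a) - m₀ h a`, and
since `m₀ a + p₁/n = 1` the last term is `h 1 - h (p₁/n) - h (m₀ a)`; solve for `h a`. -/

open Finset

theorem sum_Ico_map_add_natCast_mul {R A : Type*} [Semiring R] [AddCommGroup A]
    (h : R → A) (a : R) {m : ℕ} (hm : 0 < m) :
    ∑ j ∈ Ico 1 m, (h (a + j * a) - h a - h (j * a)) = h (m * a) - m • h a := by
  induction m, hm using Nat.le_induction with
  | base => simp
  | succ k hk ih =>
    have hsucc : a + k * a = ((k + 1 : ℕ) : R) * a := by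
      rw [Nat.cast_succ, add_mul, one_mul, add_comm]
    rw [sum_Ico_succ_top hk, ih, hsucc, succ_nsmul]
    abel

theorem stmt_4_general (h : ℝ → ℝ)
    (G : ℝ → ℝ → ℝ) (hG : ∀ x y : ℝ, G x y = h (x + y) - h x - h y)
    (p n : ℕ) (hp : 0 < p) (hn : 0 < n) (hlt : (p : ℝ) / n < 1 / 2)
    (m₀ p₁ : ℕ) (hm₀ : m₀ = n / p) (hp₁ : p₁ = n - m₀ * p) :
    h ((p : ℝ) / n) = h 1 / (m₀ : ℝ)
      - (1 / (m₀ : ℝ)) *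
          ((∑ j ∈ Finset.Ico 1 m₀, G ((p : ℝ) / n) ((j : ℝ) * ((p : ℝ) / n)))
            + G ((p₁ : ℝ) / n) (1 - (p₁ : ℝ) / n))
      - h ((p₁ : ℝ) / n) / (m₀ : ℝ) := by
  have hnR : (0 : ℝ) < n := by exact_mod_cast hn
  have hpn : p ≤ n := by
    have : (p : ℝ) < n := by rw [div_lt_iff₀ hnR] at hlt; linarith
    exact_mod_cast this.le
  have hm : 0 < m₀ := hm₀ ▸ Nat.div_pos hpn hp
  have hdiv : (m₀ : ℝ) * p + p₁ = n := by
    rw [hp₁, hm₀]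
    exact_mod_cast Nat.add_sub_cancel' (Nat.div_mul_le_self n p)
  have hmul : (m₀ : ℝ) * ((p : ℝ) / n) = 1 - (p₁ : ℝ) / n := by
    field_simp
    linarith
  simp only [hG]
  rw [sum_Ico_map_add_natCast_mul h _ hm, nsmul_eq_mul, hmul, add_sub_cancel]
  field_simp
  ring

/-- Let `h(0) = 0`, `G(x,y) = h(x+y) - h(x) - h(y)`, `p, n` positive integers
with `p/n ∈ (0, 1/2)`, `m₀ = ⌊n/p⌋`, `p₁ = n - m₀·p`. Then
`h(p/n) = h(1)/m₀ - (1/m₀)[Σ_{j=1}^{m₀-1} G(p/n, j·p/n) + G(p₁/n, 1 - p₁/n)] - h(p₁/n)/m₀`. -/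
theorem stmt_4 (h : ℝ → ℝ) (h0 : h 0 = 0)
    (G : ℝ → ℝ → ℝ) (hG : ∀ x y : ℝ, G x y = h (x + y) - h x - h y)
    (p n : ℕ) (hp : 0 < p) (hn : 0 < n) (hlt : (p : ℝ) / n < 1 / 2)
    (m₀ p₁ : ℕ) (hm₀ : m₀ = n / p) (hp₁ : p₁ = n - m₀ * p) :
    h ((p : ℝ) / n) = h 1 / (m₀ : ℝ)
      - (1 / (m₀ : ℝ)) *
          ((∑ j ∈ Finset.Ico 1 m₀, G ((p : ℝ) / n) ((j : ℝ) * ((p : ℝ) / n)))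
            + G ((p₁ : ℝ) / n) (1 - (p₁ : ℝ) / n))
      - h ((p₁ : ℝ) / n) / (m₀ : ℝ) :=
  stmt_4_general h G hG p n hp hn hlt m₀ p₁ hm₀ hp₁
end

section
/- Let h : ℝ → ℝ satisfy h(0) = 0 and suppose G(x,y) = h(x+y) − h(x) − h(y) defines a continuous function on ℝ². Let p, n be positive integers with gcd(p,n) = 1 and p/n ∈ (0, 1/2), and set m₀ = ⌊n/p⌋. Then |h(p/n)| ≤ |h(1)|/m₀ + (m₀/(m₀ − 1))·ω(G; p/n; [0,1]²). -/
open Set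

def doubleDiff (h : ℝ → ℝ) (q : ℝ × ℝ) : ℝ := h (q.1 + q.2) - h q.1 - h q.2

theorem abs_sub_le_omega2_s5 {F : ℝ × ℝ → ℝ} {δ : ℝ} {Ω : Set (ℝ × ℝ)} (hΩ : IsCompact Ω)
    (hF : ContinuousOn F Ω) {u v : ℝ × ℝ} (hu : u ∈ Ω) (hv : v ∈ Ω)
    (huv : Real.sqrt ((u.1 - v.1) ^ 2 + (u.2 - v.2) ^ 2) ≤ δ) :
    |F u - F v| ≤ omega2 F δ Ω := by
  obtain ⟨M, hM⟩ := hΩ.exists_bound_of_continuousOn hF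
  refine le_csSup ⟨2 * M, ?_⟩ ⟨u, hu, v, hv, huv, rfl⟩
  rintro _ ⟨u, hu, v, hv, -, rfl⟩
  have hMu := hM u hu
  have hMv := hM v hv
  rw [Real.norm_eq_abs] at hMu hMv
  linarith [abs_sub (F u) (F v)]

section DoubleDiff

variable {h : ℝ → ℝ}

theorem abs_doubleDiff_le_omega2_of_mem_Icc (h0 : h 0 = 0) (hG : Continuous (doubleDiff h))
    {t x : ℝ} (ht : t ∈ Icc (0 : ℝ) 1) (hx : x ∈ Icc (0 : ℝ) 1) :
    |doubleDiff h (x, t)| ≤ omega2 (doubleDiff h) t (Icc 0 1 ×ˢ Icc 0 1) := by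
  have hz : doubleDiff h (x, 0) = 0 := by simp [doubleDiff, h0]
  have := abs_sub_le_omega2_s5 (isCompact_Icc.prod isCompact_Icc) hG.continuousOn
    (δ := t) (u := (x, t)) (v := (x, 0)) ⟨hx, ht⟩ ⟨hx, ⟨le_rfl, zero_le_one⟩⟩
    (by simp [Real.sqrt_sq ht.1])
  rwa [hz, sub_zero] at this

theorem abs_doubleDiff_one_le_omega2 (h0 : h 0 = 0) (hG : Continuous (doubleDiff h))
    {t y : ℝ} (ht : t ≤ 1) (hy : y ∈ Icc 0 t) :
    |doubleDiff h (y, 1)| ≤ omega2 (doubleDiff h) t (Icc 0 1 ×ˢ Icc 0 1) := by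
  have hz : doubleDiff h (0, 1) = 0 := by simp [doubleDiff, h0]
  have := abs_sub_le_omega2_s5 (isCompact_Icc.prod isCompact_Icc) hG.continuousOn
    (δ := t) (u := (y, 1)) (v := (0, 1)) ⟨⟨hy.1, hy.2.trans ht⟩, ⟨zero_le_one, le_rfl⟩⟩
    ⟨⟨le_rfl, zero_le_one⟩, ⟨zero_le_one, le_rfl⟩⟩ (by simpa [Real.sqrt_sq hy.1] using hy.2)
  rwa [hz, sub_zero] at this

variable {t ε : ℝ}

/-- `k` counts the wrap-arounds: `j * t - k` is the fractional part of `j * t`. -/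
theorem exists_orbit_abs_sub_le (h0 : h 0 = 0) (ht : t ∈ Icc (0 : ℝ) 1)
    (hstep : ∀ x ∈ Icc (0 : ℝ) 1, |doubleDiff h (x, t)| ≤ ε)
    (hwrap : ∀ y ∈ Icc 0 t, |doubleDiff h (y, 1)| ≤ ε) (j : ℕ) :
    ∃ k : ℕ, (j * t - k ∈ Ico (0 : ℝ) 1) ∧
      |h (j * t - k) - (j * h t - k * h 1)| ≤ (j + k) * ε := by
  induction j with
  | zero => exact ⟨0, by simp, by simp [h0]⟩
  | succ j ih =>
    obtain ⟨k, ⟨hx0, hx1⟩, hk⟩ := ih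
    set x : ℝ := j * t - k with hx
    have hGx := hstep x ⟨hx0, hx1.le⟩
    simp only [doubleDiff] at hGx
    have hA := abs_add_le (h x - (j * h t - k * h 1)) (h (x + t) - h x - h t)
    have hnext : ((j + 1 : ℕ) : ℝ) * t - k = x + t := by rw [hx]; push_cast; ring
    by_cases hnowrap : x + t < 1
    · refine ⟨k, ?_, ?_⟩
      · rw [hnext]; exact ⟨by linarith [ht.1], hnowrap⟩
      · rw [hnext, show h (x + t) - ((j + 1 : ℕ) * h t - k * h 1)
            = (h x - (j * h t - k * h 1)) + (h (x + t) - h x - h t) by push_cast; ring]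
        push_cast
        linarith
    · set y : ℝ := x + t - 1
      have hGy := hwrap y ⟨by linarith, by linarith⟩
      simp only [doubleDiff, show y + 1 = x + t by ring] at hGy
      have hnext' : ((j + 1 : ℕ) : ℝ) * t - (k + 1 : ℕ) = y := by
        push_cast at hnext ⊢; linarith
      refine ⟨k + 1, ?_, ?_⟩
      · rw [hnext']; exact ⟨by linarith, by linarith [ht.2]⟩
      · rw [hnext', show h y - ((j + 1 : ℕ) * h t - (k + 1 : ℕ) * h 1)
            = (h x - (j * h t - k * h 1)) + (h (x + t) - h x - h t)
              - (h (x + t) - h y - h 1) by push_cast; ring]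
        push_cast
        linarith [abs_sub (h x - (j * h t - k * h 1) + (h (x + t) - h x - h t))
          (h (x + t) - h y - h 1)]

theorem abs_le_of_nat_mul_eq (h0 : h 0 = 0) (ht : t ∈ Icc (0 : ℝ) 1)
    (hstep : ∀ x ∈ Icc (0 : ℝ) 1, |doubleDiff h (x, t)| ≤ ε)
    (hwrap : ∀ y ∈ Icc 0 t, |doubleDiff h (y, 1)| ≤ ε) {n p : ℕ} (hn : 0 < n)
    (htnp : n * t = p) :
    |h t| ≤ t * |h 1| + (1 + t) * ε := by
  obtain ⟨k, ⟨hk0, hk1⟩, hk⟩ := exists_orbit_abs_sub_le h0 ht hstep hwrap n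
  have hkp : k = p := by
    rw [htnp] at hk0 hk1
    have : k ≤ p := by exact_mod_cast sub_nonneg.mp hk0
    have : p < k + 1 := by exact_mod_cast sub_lt_iff_lt_add'.mp hk1
    omega
  subst hkp
  rw [htnp, sub_self, h0, zero_sub, abs_neg] at hk
  have hn' : (0 : ℝ) < n := by exact_mod_cast hn
  have hp : (k : ℝ) = n * t := htnp.symm
  rw [← mul_le_mul_iff_of_pos_left hn']
  calc (n : ℝ) * |h t| = |n * h t| := by rw [abs_mul, abs_of_pos hn']
    _ ≤ |n * h t - k * h 1| + k * |h 1| := by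
        have := abs_sub_abs_le_abs_sub (n * h t) (k * h 1)
        rw [abs_mul (k : ℝ), Nat.abs_cast] at this
        linarith
    _ ≤ (n + k) * ε + k * |h 1| := by linarith
    _ = n * (t * |h 1| + (1 + t) * ε) := by rw [hp]; ring

end DoubleDiff

theorem mul_add_one_add_mul_le_div_add {t m a w : ℝ} (ht : 0 ≤ t) (hm : 1 < m)
    (htm : t * m ≤ 1) (ha : 0 ≤ a) (hw : 0 ≤ w) :
    t * a + (1 + t) * w ≤ a / m + m / (m - 1) * w := by
  have hta : t * a ≤ a / m := by
    rw [le_div_iff₀ (by linarith)]; nlinarith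
  have htw : 1 + t ≤ m / (m - 1) := by
    rw [le_div_iff₀ (by linarith)]; nlinarith
  nlinarith

theorem stmt_5_general (h : ℝ → ℝ) (h0 : h 0 = 0)
    (hG : Continuous (fun q : ℝ × ℝ => h (q.1 + q.2) - h q.1 - h q.2))
    (p n : ℕ) (hp : 0 < p) (hn : 0 < n)
    (hlt : (p : ℝ) / n < 1 / 2) (m₀ : ℕ) (hm₀ : m₀ = n / p) :
    |h ((p : ℝ) / n)| ≤ |h 1| / (m₀ : ℝ)
      + ((m₀ : ℝ) / ((m₀ : ℝ) - 1)) *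
          omega2 (fun q : ℝ × ℝ => h (q.1 + q.2) - h q.1 - h q.2) ((p : ℝ) / n)
            (Set.Icc (0 : ℝ) 1 ×ˢ Set.Icc (0 : ℝ) 1) := by
  change |h _| ≤ _ + _ * omega2 (doubleDiff h) _ _
  have hn' : (0 : ℝ) < n := by exact_mod_cast hn
  set t : ℝ := (p : ℝ) / n
  have ht : t ∈ Icc (0 : ℝ) 1 := ⟨by positivity, by linarith⟩
  have hstep x (hx : x ∈ Icc (0 : ℝ) 1) := abs_doubleDiff_le_omega2_of_mem_Icc h0 hG ht hx
  have hwrap y (hy : y ∈ Icc 0 t) := abs_doubleDiff_one_le_omega2 h0 hG ht.2 hy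
  have hω : 0 ≤ omega2 (doubleDiff h) t (Icc 0 1 ×ˢ Icc 0 1) :=
    (abs_nonneg _).trans (hstep 0 ⟨le_rfl, zero_le_one⟩)
  have h2p : 2 * p < n := by
    have := (div_lt_iff₀ hn').mp hlt
    exact_mod_cast (by linarith : (2 * p : ℝ) < n)
  have hm : (1 : ℝ) < m₀ := by
    have : 2 ≤ m₀ := hm₀ ▸ (Nat.le_div_iff_mul_le hp).mpr (by omega)
    exact_mod_cast this
  have htm : t * m₀ ≤ 1 := by
    have : ((m₀ * p : ℕ) : ℝ) ≤ n := by exact_mod_cast hm₀ ▸ Nat.div_mul_le_self n p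
    rw [div_mul_eq_mul_div, div_le_one hn']
    push_cast at this; linarith
  refine (abs_le_of_nat_mul_eq h0 ht hstep hwrap hn (p := p) (by simp only [t]; field_simp)).trans ?_
  exact mul_add_one_add_mul_le_div_add ht.1 hm htm (abs_nonneg _) hω

/-- Let `h(0) = 0` and `G(x,y) = h(x+y) - h(x) - h(y)` be continuous on `ℝ²`.
For coprime positive integers `p, n` with `p/n ∈ (0, 1/2)` and `m₀ = ⌊n/p⌋`:
`|h(p/n)| ≤ |h(1)|/m₀ + (m₀/(m₀-1))·ω(G; p/n; [0,1]²)`. -/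
theorem stmt_5 (h : ℝ → ℝ) (h0 : h 0 = 0)
    (hG : Continuous (fun q : ℝ × ℝ => h (q.1 + q.2) - h q.1 - h q.2))
    (p n : ℕ) (hp : 0 < p) (hn : 0 < n) (hgcd : Nat.gcd p n = 1)
    (hlt : (p : ℝ) / n < 1 / 2) (m₀ : ℕ) (hm₀ : m₀ = n / p) :
    |h ((p : ℝ) / n)| ≤ |h 1| / (m₀ : ℝ)
      + ((m₀ : ℝ) / ((m₀ : ℝ) - 1)) *
          omega2 (fun q : ℝ × ℝ => h (q.1 + q.2) - h q.1 - h q.2) ((p : ℝ) / n)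
            (Set.Icc (0 : ℝ) 1 ×ˢ Set.Icc (0 : ℝ) 1) :=
  stmt_5_general h h0 hG p n hp hn hlt m₀ hm₀
end

section
/- Let h : ℝ → ℝ satisfy h(0) = 0 and suppose G(x,y) = h(x+y) − h(x) − h(y) defines a continuous function on ℝ². Let δ ∈ (0, 1/2) be rational, M ≥ 1, and let x be a rational number such that x and x + δ both belong to [−M, M]. Then |h(x+δ) − h(x)| ≤ 2δ·|h(1)| + 3·ω(G; δ; [−M,M]²). -/
/-!
Write `ω` for the modulus of continuity of `G` and `δ = p / q`. Since `G(a, 0) = 0`, every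
`|G(a, b)|` with `0 ≤ b ≤ δ` is at most `ω`, so `n ↦ h (n / q)` is additive up to `ω` on steps
`n ≤ p` inside `[0, q]`. Running Euclid's algorithm on `(p, q)` with only such steps gives
`|q h(δ) - p h(1)| ≤ (p + q) ω`, i.e. `|h(δ) - δ h(1)| ≤ 2ω`, and
`h(x + δ) - h(x) = G(x, δ) + h(δ)` adds one more `ω`.
-/

open Set

def ApproxAdditiveOn (f : ℕ → ℝ) (p N : ℕ) (ε : ℝ) : Prop :=
  ∀ m n, n ≤ p → m + n ≤ N → |f (m + n) - f m - f n| ≤ ε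

namespace ApproxAdditiveOn

variable {f : ℕ → ℝ} {p N : ℕ} {ε : ℝ}

theorem abs_apply_zero_le (hf : ApproxAdditiveOn f p N ε) : |f 0| ≤ ε := by
  simpa using hf 0 0 (Nat.zero_le p) (Nat.zero_le N)

theorem abs_apply_mul_add_sub_le (hf : ApproxAdditiveOn f p N ε) {a r : ℕ} (ha : a ≤ p) :
    ∀ c : ℕ, c * a + r ≤ N → |f (c * a + r) - (c * f a + f r)| ≤ c * ε
  | 0, _ => by simp
  | c + 1, hle => by
    rw [add_mul, one_mul, add_right_comm] at hle
    have hstep := hf (c * a + r) a ha hle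
    have hprev := hf.abs_apply_mul_add_sub_le (r := r) ha c (by linarith)
    calc |f ((c + 1) * a + r) - ((c + 1 : ℕ) * f a + f r)|
        = |(f (c * a + r + a) - f (c * a + r) - f a) + (f (c * a + r) - (c * f a + f r))| := by
          rw [show (c + 1) * a + r = c * a + r + a by ring]; push_cast; ring_nf
      _ ≤ ε + c * ε := (abs_add_le _ _).trans (add_le_add hstep hprev)
      _ = (c + 1 : ℕ) * ε := by push_cast; ring

/-- Euclid's algorithm on the pair `(a, b)`: each division step `b = c a + r` costs `a c ε`. -/
theorem abs_mul_sub_mul_le (hf : ApproxAdditiveOn f p N ε) {a b : ℕ} (ha : a ≤ p)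
    (haN : a ≤ N) (hb : b ≤ N) : |b * f a - a * f b| ≤ (a + b) * ε := by
  induction a using Nat.strong_induction_on generalizing b with
  | _ a ih =>
    rcases Nat.eq_zero_or_pos a with rfl | ha0
    · simpa [abs_mul] using mul_le_mul_of_nonneg_left hf.abs_apply_zero_le (Nat.cast_nonneg b)
    set c := b / a
    set r := b % a
    have hb_eq : c * a + r = b := by rw [mul_comm]; exact Nat.div_add_mod b a
    have hra : r < a := Nat.mod_lt b ha0
    have hdiv := hf.abs_apply_mul_add_sub_le ha c (hb_eq ▸ hb)
    rw [hb_eq, abs_sub_comm] at hdiv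
    have hrec := ih r hra (by omega) (by omega) haN
    rw [abs_sub_comm] at hrec
    have hb_cast : (b : ℝ) = c * a + r := by exact_mod_cast hb_eq.symm
    calc |b * f a - a * f b| = |a * ((c * f a + f r) - f b) + (r * f a - a * f r)| := by
          rw [hb_cast]; ring_nf
      _ ≤ a * (c * ε) + (r + a) * ε := by
          refine (abs_add_le _ _).trans (add_le_add ?_ hrec)
          rw [abs_mul, Nat.abs_cast]
          exact mul_le_mul_of_nonneg_left hdiv (Nat.cast_nonneg a)
      _ = (a + b) * ε := by rw [hb_cast]; ring

end ApproxAdditiveOn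

theorem abs_sub_rat_mul_le_of_approx_add {h : ℝ → ℝ} {ε : ℝ} {δ : ℚ} (hδ0 : 0 ≤ δ)
    (hδ1 : δ ≤ 1)
    (hadd : ∀ a b : ℝ, 0 ≤ a → 0 ≤ b → b ≤ δ → a + b ≤ 1 → |h (a + b) - h a - h b| ≤ ε) :
    |h δ - δ * h 1| ≤ (1 + δ) * ε := by
  obtain ⟨p, hp⟩ := Int.eq_ofNat_of_zero_le (Rat.num_nonneg.mpr hδ0)
  set q := δ.den
  have hq : (0 : ℝ) < q := by exact_mod_cast δ.den_pos
  have hδ : (δ : ℝ) = p / q := by rw [Rat.cast_def, hp, Int.cast_natCast]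
  have hpq : p ≤ q := by
    have : (p : ℝ) / q ≤ 1 := by rw [← hδ]; exact_mod_cast hδ1
    exact_mod_cast (div_le_one hq).mp this
  have hf : ApproxAdditiveOn (fun n => h (n / q)) p q ε := by
    intro m n hn hmn
    have hnδ : (n : ℝ) / q ≤ δ := by rw [hδ]; gcongr
    have hmn1 : (m : ℝ) / q + n / q ≤ 1 := by
      rw [← add_div, div_le_one hq]; exact_mod_cast hmn
    simpa [add_div] using hadd _ _ (by positivity) (by positivity) hnδ hmn1
  have key := hf.abs_mul_sub_mul_le le_rfl hpq le_rfl
  have hp_eq : (p : ℝ) = q * δ := by rw [hδ]; field_simp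
  have hscale : (q : ℝ) * h (p / q) - p * h (q / q) = q * (h δ - δ * h 1) := by
    rw [div_self hq.ne', ← hδ, hp_eq]; ring
  have hbound : (p + q) * ε = q * ((1 + δ) * ε) := by rw [hp_eq]; ring
  rw [hscale, abs_mul, abs_of_pos hq, hbound] at key
  exact le_of_mul_le_mul_left key hq

theorem abs_sub_le_omega2_s7 {F : ℝ × ℝ → ℝ} {δ : ℝ} {Ω : Set (ℝ × ℝ)} (hΩ : IsCompact Ω)
    (hF : ContinuousOn F Ω) {P Q : ℝ × ℝ} (hP : P ∈ Ω) (hQ : Q ∈ Ω)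
    (hPQ : Real.sqrt ((P.1 - Q.1) ^ 2 + (P.2 - Q.2) ^ 2) ≤ δ) :
    |F P - F Q| ≤ omega2 F δ Ω := by
  obtain ⟨C, hC⟩ := hΩ.exists_bound_of_continuousOn hF
  refine le_csSup ⟨C + C, ?_⟩ ⟨P, hP, Q, hQ, hPQ, rfl⟩
  rintro d ⟨P', hP', Q', hQ', -, rfl⟩
  exact (abs_sub _ _).trans (add_le_add (hC P' hP') (hC Q' hQ'))

/-- Since `G(a, 0) = 0`, the value `G(a, b)` is itself an increment of `G` over distance `|b|`. -/
theorem abs_doubleDiff_le_omega2 {h : ℝ → ℝ} (h0 : h 0 = 0)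
    (hG : Continuous (fun q : ℝ × ℝ => h (q.1 + q.2) - h q.1 - h q.2)) {M δ a b : ℝ}
    (ha : a ∈ Icc (-M) M) (hb : b ∈ Icc (-M) M) (hbδ : |b| ≤ δ) :
    |h (a + b) - h a - h b| ≤ omega2 (fun q : ℝ × ℝ => h (q.1 + q.2) - h q.1 - h q.2) δ
      (Icc (-M) M ×ˢ Icc (-M) M) := by
  have h0M : (0 : ℝ) ∈ Icc (-M) M := ⟨by linarith [hb.1, hb.2], by linarith [hb.1, hb.2]⟩
  have := abs_sub_le_omega2_s7 (isCompact_Icc.prod isCompact_Icc) hG.continuousOn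
    (P := (a, b)) (Q := (a, 0)) ⟨ha, hb⟩ ⟨ha, h0M⟩ (by simpa [Real.sqrt_sq_eq_abs] using hbδ)
  simpa [h0] using this

theorem stmt_7_general (h : ℝ → ℝ) (h0 : h 0 = 0)
    (hG : Continuous (fun q : ℝ × ℝ => h (q.1 + q.2) - h q.1 - h q.2))
    (δ : ℚ) (hδ0 : 0 < δ) (hδ : (δ : ℝ) < 1 / 2) (M : ℝ) (hM : 1 ≤ M)
    (x : ℚ) (hx : (x : ℝ) ∈ Set.Icc (-M) M) :
    |h ((x : ℝ) + (δ : ℝ)) - h (x : ℝ)| ≤ 2 * (δ : ℝ) * |h 1|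
      + 3 * omega2 (fun q : ℝ × ℝ => h (q.1 + q.2) - h q.1 - h q.2) (δ : ℝ)
          (Set.Icc (-M) M ×ˢ Set.Icc (-M) M) := by
  set ω := omega2 (fun q : ℝ × ℝ => h (q.1 + q.2) - h q.1 - h q.2) (δ : ℝ)
    (Icc (-M) M ×ˢ Icc (-M) M)
  have hδ0' : (0 : ℝ) < δ := by exact_mod_cast hδ0
  have hδM : (δ : ℝ) ∈ Icc (-M) M := ⟨by linarith, by linarith⟩
  have hstep : |h (x + δ) - h x - h δ| ≤ ω :=
    abs_doubleDiff_le_omega2 h0 hG hx hδM (abs_of_pos hδ0').le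
  have hlinear : |h δ - δ * h 1| ≤ (1 + δ) * ω := by
    refine abs_sub_rat_mul_le_of_approx_add hδ0.le (by exact_mod_cast (by linarith : (δ : ℝ) ≤ 1))
      fun a b ha hb hbδ hab => abs_doubleDiff_le_omega2 h0 hG ⟨by linarith, by linarith⟩
        ⟨by linarith, by linarith⟩ ((abs_of_nonneg hb).trans_le hbδ)
  have hω : 0 ≤ ω := (abs_nonneg _).trans hstep
  calc |h (x + δ) - h x|
      = |(h (x + δ) - h x - h δ) + (h δ - δ * h 1) + δ * h 1| := by ring_nf
    _ ≤ ω + (1 + δ) * ω + δ * |h 1| := by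
        refine (abs_add_three _ _ _).trans (add_le_add_three hstep hlinear ?_)
        rw [abs_mul, abs_of_pos hδ0']
    _ ≤ 2 * δ * |h 1| + 3 * ω := by nlinarith [abs_nonneg (h 1)]

/-- Let `h(0) = 0` and `G(x,y) = h(x+y) - h(x) - h(y)` be continuous on `ℝ²`.
For rational `δ ∈ (0, 1/2)`, `M ≥ 1`, and rational `x` with `x, x + δ ∈ [-M, M]`:
`|h(x+δ) - h(x)| ≤ 2δ|h(1)| + 3·ω(G; δ; [-M,M]²)`. -/
theorem stmt_7 (h : ℝ → ℝ) (h0 : h 0 = 0)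
    (hG : Continuous (fun q : ℝ × ℝ => h (q.1 + q.2) - h q.1 - h q.2))
    (δ : ℚ) (hδ0 : 0 < δ) (hδ : (δ : ℝ) < 1 / 2) (M : ℝ) (hM : 1 ≤ M)
    (x : ℚ) (hx : (x : ℝ) ∈ Set.Icc (-M) M)
    (hxδ : (x : ℝ) + (δ : ℝ) ∈ Set.Icc (-M) M) :
    |h ((x : ℝ) + (δ : ℝ)) - h (x : ℝ)| ≤ 2 * (δ : ℝ) * |h 1|
      + 3 * omega2 (fun q : ℝ × ℝ => h (q.1 + q.2) - h q.1 - h q.2) (δ : ℝ)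
          (Set.Icc (-M) M ×ˢ Set.Icc (-M) M) :=
  stmt_7_general h h0 hG δ hδ0 hδ M hM x hx
end

section
/- Suppose g : ℝ → ℝ is a function such that F(x,y) = g(x+y) − g(x) − g(y) defines a continuous function F : ℝ² → ℝ. Then the restriction of g to the rational numbers is uniformly continuous on [−M, M] ∩ ℚ for every M ≥ 1; in particular, the restriction of g to ℚ is continuous. -/
/-- Telescoping sum: `g(n t) - g 0 = n (g t - g 0) + Σ E(k t, t)`. -/
private lemma aux_wsum (g : ℝ → ℝ) (t : ℝ) (n : ℕ) :
    g (n * t) - g 0 = n * (g t - g 0) +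
      ∑ k ∈ Finset.range n, (g (k * t + t) - g (k * t) - g t + g 0) := by
  induction n with
  | zero => simp
  | succ n ih =>
    rw [Finset.sum_range_succ]
    have h1 : ((n + 1 : ℕ) : ℝ) * t = (n : ℝ) * t + t := by push_cast; ring
    rw [h1]
    push_cast
    linarith

/-- Smallness of `E` near the axis `y = 0`, uniformly for `|x| ≤ C`. -/
private lemma aux_Ebound (g : ℝ → ℝ)
    (hF : Continuous (fun p : ℝ × ℝ => g (p.1 + p.2) - g p.1 - g p.2))
    (C : ℝ) (ε : ℝ) (hε : 0 < ε) :
    ∃ δ, 0 < δ ∧ δ ≤ 1 ∧ ∀ x y : ℝ, |x| ≤ C → |y| ≤ δ →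
      |g (x + y) - g x - g y + g 0| < ε := by
  have hEc : Continuous (fun p : ℝ × ℝ => g (p.1 + p.2) - g p.1 - g p.2 + g 0) :=
    hF.add continuous_const
  have hK : IsCompact (Set.Icc (-C) C ×ˢ Set.Icc (-1 : ℝ) 1) :=
    isCompact_Icc.prod isCompact_Icc
  have hUC := hK.uniformContinuousOn_of_continuous hEc.continuousOn
  rw [Metric.uniformContinuousOn_iff] at hUC
  obtain ⟨δ, hδ, h⟩ := hUC ε hε
  refine ⟨min (δ / 2) 1, by positivity, min_le_right _ _, ?_⟩
  intro x y hx hy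
  have hy1 : |y| ≤ 1 := hy.trans (min_le_right _ _)
  have hyδ : |y| < δ := lt_of_le_of_lt (hy.trans (min_le_left _ _)) (by linarith)
  have hmem1 : ((x, y) : ℝ × ℝ) ∈ Set.Icc (-C) C ×ˢ Set.Icc (-1 : ℝ) 1 :=
    Set.mem_prod.mpr ⟨Set.mem_Icc.mpr (abs_le.mp hx), Set.mem_Icc.mpr (abs_le.mp hy1)⟩
  have hmem2 : ((x, 0) : ℝ × ℝ) ∈ Set.Icc (-C) C ×ˢ Set.Icc (-1 : ℝ) 1 :=
    Set.mem_prod.mpr ⟨Set.mem_Icc.mpr (abs_le.mp hx),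
      Set.mem_Icc.mpr (by constructor <;> norm_num)⟩
  have hd : dist ((x, y) : ℝ × ℝ) (x, 0) < δ := by
    rw [Prod.dist_eq]
    simp only [dist_self, Real.dist_eq, sub_zero]
    exact max_lt hδ hyδ
  have := h _ hmem1 _ hmem2 hd
  simp only [Real.dist_eq] at this
  have h0 : g (x + 0) - g x - g 0 + g 0 = 0 := by rw [add_zero]; ring
  calc |g (x + y) - g x - g y + g 0|
      = |(g (x + y) - g x - g y + g 0) - (g (x + 0) - g x - g 0 + g 0)| := by rw [h0, sub_zero]
    _ < ε := this


private lemma aux_arith (W m δ ε' B : ℝ) (hW : 0 ≤ W) (hm1 : 1 ≤ 2 * δ * m)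
    (hmge2 : 2 ≤ m) (hδ : δ ≤ 1 / 4) (hε' : 0 ≤ ε') (hB0 : 0 ≤ B)
    (h : m * W ≤ B + (3 * ε' + 4 * δ * B) + ε' + m * ε') :
    W ≤ 3 * ε' + 4 * δ * B := by
  have f1 : 0 ≤ ε' * (2 * m - 4) := mul_nonneg hε' (by linarith)
  have f2 : 0 ≤ B * (4 * δ * m - 4 * δ - 1) := mul_nonneg hB0 (by linarith)
  have hm1' : (0:ℝ) ≤ m - 1 := by linarith
  nlinarith [f1, f2, h, hW, hm1']

/-- The key estimate: for small positive rationals `p/q`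
`|g(p/q) - g 0| ≤ 3 ε' + 4 δ B`, proved by Euclidean strong induction on `p`. -/
private lemma aux_small (g : ℝ → ℝ) (δ ε' B : ℝ) (hδ0 : 0 < δ) (hδ : δ ≤ 1 / 4)
    (hε' : 0 ≤ ε') (hB : |g 1 - g 0| ≤ B) (hB0 : 0 ≤ B)
    (hE : ∀ x y : ℝ, 0 ≤ x → x ≤ 1 → 0 ≤ y → y ≤ δ →
      |g (x + y) - g x - g y + g 0| ≤ ε') :
    ∀ p q : ℕ, 0 < q → (p : ℝ) ≤ δ * q → |g ((p : ℝ) / q) - g 0| ≤ 3 * ε' + 4 * δ * B := by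
  suffices H : ∀ N p q : ℕ, p ≤ N → 0 < q → (p : ℝ) ≤ δ * q →
      |g ((p : ℝ) / q) - g 0| ≤ 3 * ε' + 4 * δ * B by
    intro p q hq hpq; exact H p p q le_rfl hq hpq
  intro N
  induction N with
  | zero =>
    intro p q hp0 hq hpq
    interval_cases p
    simp only [Nat.cast_zero, zero_div, sub_self, abs_zero]
    positivity
  | succ N ihN =>
    intro p q hpN hq hpq
    have ih : ∀ p' q' : ℕ, p' < p → 0 < q' → (p' : ℝ) ≤ δ * q' →
        |g ((p' : ℝ) / q') - g 0| ≤ 3 * ε' + 4 * δ * B := by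
      intro p' q' hp' hq' hpq'
      exact ihN p' q' (by omega) hq' hpq'
    have hq' : (0 : ℝ) < q := by exact_mod_cast hq
    rcases Nat.eq_zero_or_pos p with hp | hp
    · subst hp
      simp only [Nat.cast_zero, zero_div, sub_self, abs_zero]
      positivity
    have hp' : (0 : ℝ) < p := by exact_mod_cast hp
    set m : ℕ := q / p with hm
    set r : ℕ := q % p with hr
    have hqr : p * m + r = q := Nat.div_add_mod q p
    have hrp : r < p := Nat.mod_lt q hp
    have hqr' : ((p : ℝ) * m + r = q) := by exact_mod_cast congrArg (Nat.cast : ℕ → ℝ) hqr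
    have hrp' : (r : ℝ) < p := by exact_mod_cast hrp
    have hr0 : (0 : ℝ) ≤ r := Nat.cast_nonneg r
    have hm0 : (0 : ℝ) ≤ m := Nat.cast_nonneg m
    have hcomm : (m : ℝ) * p = (p : ℝ) * m := mul_comm _ _
    -- basic real inequalities
    have htδ : (p : ℝ) / q ≤ δ := by rw [div_le_iff₀ hq']; linarith
    have hq4p : 4 * (p : ℝ) ≤ q := by
      have h4 := mul_le_mul_of_nonneg_right hδ hq'.le
      linarith
    have hmp : (m : ℝ) * p ≤ q := by linarith
    have hqm : (q : ℝ) < (m : ℝ) * p + p := by linarith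
    -- m is big: q ≤ 2 m p , hence 1 ≤ 2 δ m
    have hm2 : (q : ℝ) ≤ 2 * ((m : ℝ) * p) := by linarith
    have hm1 : (1 : ℝ) ≤ 2 * δ * m := by
      have key := mul_le_mul_of_nonneg_left hpq (by positivity : (0 : ℝ) ≤ 2 * m)
      nlinarith [hm2, key, hq']
    have hmge2 : (2 : ℝ) ≤ m := by
      have h2d : 2 * δ ≤ 1 / 2 := by linarith
      have := mul_le_mul_of_nonneg_right h2d hm0
      linarith
    set t : ℝ := (p : ℝ) / q with htdef
    have ht0 : 0 < t := by positivity
    have htd : t ≤ δ := htδ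
    have hmt1 : (m : ℝ) * t ≤ 1 := by
      rw [htdef, mul_div_assoc', div_le_one hq']
      linarith
    have hmt0 : 0 ≤ (m : ℝ) * t := by positivity
    -- the sum of error terms
    have e1 := aux_wsum g t m
    have hS : |∑ k ∈ Finset.range m, (g (k * t + t) - g (k * t) - g t + g 0)| ≤ m * ε' := by
      calc |∑ k ∈ Finset.range m, (g (k * t + t) - g (k * t) - g t + g 0)|
          ≤ ∑ k ∈ Finset.range m, |g (k * t + t) - g (k * t) - g t + g 0| :=
            Finset.abs_sum_le_sum_abs _ _
        _ ≤ ∑ _k ∈ Finset.range m, ε' := by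
            apply Finset.sum_le_sum
            intro k hk
            have hk' : (k : ℝ) ≤ m := by
              exact_mod_cast le_of_lt (Finset.mem_range.mp hk)
            exact hE _ _ (mul_nonneg (Nat.cast_nonneg k) ht0.le)
              ((mul_le_mul_of_nonneg_right hk' ht0.le).trans hmt1) ht0.le htd
        _ = m * ε' := by rw [Finset.sum_const, Finset.card_range]; simp [nsmul_eq_mul]
    -- splitting 1 = m t + r/q
    have h1 : (m : ℝ) * t + (r : ℝ) / q = 1 := by
      have hh : (m : ℝ) * t + (r : ℝ) / q = ((p : ℝ) * m + r) / q := by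
        rw [htdef]; ring
      rw [hh, hqr', div_self hq'.ne']
    have e2 : g ((m : ℝ) * t + (r : ℝ) / q) = g 1 := by rw [h1]
    -- error term at the junction
    have hE1 : |g ((m : ℝ) * t + (r : ℝ) / q) - g ((m : ℝ) * t) - g ((r : ℝ) / q) + g 0| ≤ ε' := by
      apply hE _ _ hmt0 hmt1 (by positivity)
      rw [div_le_iff₀ hq']
      linarith
    -- induction hypothesis on r
    have hwr : |g ((r : ℝ) / q) - g 0| ≤ 3 * ε' + 4 * δ * B :=
      ih r q hrp hq (by linarith)
    -- assemble
    have keyeq : (m : ℝ) * (g t - g 0) =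
        (g 1 - g 0) - (g ((r : ℝ) / q) - g 0)
          - (g ((m : ℝ) * t + (r : ℝ) / q) - g ((m : ℝ) * t) - g ((r : ℝ) / q) + g 0)
          - ∑ k ∈ Finset.range m, (g (k * t + t) - g (k * t) - g t + g 0) := by
      linarith [e1, e2.symm.le, e2.le]

    have habs : (m : ℝ) * |g t - g 0| ≤ B + (3 * ε' + 4 * δ * B) + ε' + m * ε' := by
      have hmabs : |(m : ℝ) * (g t - g 0)| = m * |g t - g 0| := by
        rw [abs_mul, abs_of_nonneg (Nat.cast_nonneg m)]
      rw [← hmabs, keyeq]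
      have t1 := abs_sub (g 1 - g 0) (g ((r : ℝ) / q) - g 0)
      have t2 := abs_sub ((g 1 - g 0) - (g ((r : ℝ) / q) - g 0))
        (g ((m : ℝ) * t + (r : ℝ) / q) - g ((m : ℝ) * t) - g ((r : ℝ) / q) + g 0)
      have t3 := abs_sub ((g 1 - g 0) - (g ((r : ℝ) / q) - g 0)
          - (g ((m : ℝ) * t + (r : ℝ) / q) - g ((m : ℝ) * t) - g ((r : ℝ) / q) + g 0))
        (∑ k ∈ Finset.range m, (g (k * t + t) - g (k * t) - g t + g 0))
      linarith
    exact aux_arith _ _ _ _ _ (abs_nonneg _) hm1 hmge2 hδ hε' hB0 habs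
/-- If `F(x,y) = g(x+y) - g(x) - g(y)` is continuous on `ℝ²`, then the
restriction of `g` to the rationals is uniformly continuous on `[-M,M] ∩ ℚ`
for every `M ≥ 1`; in particular the restriction of `g` to `ℚ` is continuous. -/
theorem stmt_8 (g : ℝ → ℝ)
    (hF : Continuous (fun p : ℝ × ℝ => g (p.1 + p.2) - g p.1 - g p.2)) :
    (∀ M : ℝ, 1 ≤ M → ∀ ε > (0 : ℝ), ∃ δ > (0 : ℝ), ∀ a b : ℚ,
      (a : ℝ) ∈ Set.Icc (-M) M → (b : ℝ) ∈ Set.Icc (-M) M →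
        |(a : ℝ) - (b : ℝ)| < δ → |g (a : ℝ) - g (b : ℝ)| < ε) ∧
    Continuous (fun q : ℚ => g (q : ℝ)) := by
  have main : ∀ M : ℝ, 1 ≤ M → ∀ ε > (0 : ℝ), ∃ δ > (0 : ℝ), ∀ a b : ℚ,
      (a : ℝ) ∈ Set.Icc (-M) M → (b : ℝ) ∈ Set.Icc (-M) M →
        |(a : ℝ) - (b : ℝ)| < δ → |g (a : ℝ) - g (b : ℝ)| < ε := by
    intro M hM ε hε
    set B : ℝ := |g 1 - g 0| with hBdef
    have hB0 : 0 ≤ B := abs_nonneg _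
    obtain ⟨δ₁, hδ₁0, hδ₁1, h1⟩ := aux_Ebound g hF 1 (ε / 8) (by positivity)
    obtain ⟨δ₂, hδ₂0, hδ₂1, h2⟩ := aux_Ebound g hF M (ε / 8) (by positivity)
    set δ : ℝ := min (min δ₁ δ₂) (min (1 / 4) (ε / (32 * (B + 1)))) with hδdef
    have hδ0 : 0 < δ :=
      lt_min (lt_min hδ₁0 hδ₂0) (lt_min (by norm_num) (by positivity))
    have hδ14 : δ ≤ 1 / 4 := le_trans (min_le_right _ _) (min_le_left _ _)
    have hδδ₁ : δ ≤ δ₁ := le_trans (min_le_left _ _) (min_le_left _ _)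
    have hδδ₂ : δ ≤ δ₂ := le_trans (min_le_left _ _) (min_le_right _ _)
    have hδε : δ ≤ ε / (32 * (B + 1)) := le_trans (min_le_right _ _) (min_le_right _ _)
    have hδB : 4 * δ * B ≤ ε / 8 := by
      have h := mul_le_mul_of_nonneg_right hδε hB0
      have hb1 : 0 < 32 * (B + 1) := by positivity
      rw [div_mul_eq_mul_div] at h
      have : ε / (32 * (B + 1)) * B ≤ ε / 32 := by
        rw [div_mul_eq_mul_div, div_le_div_iff₀ hb1 (by norm_num : (0:ℝ) < 32)]
        nlinarith
      nlinarith
    have hEsmall : ∀ x y : ℝ, 0 ≤ x → x ≤ 1 → 0 ≤ y → y ≤ δ →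
        |g (x + y) - g x - g y + g 0| ≤ ε / 8 := by
      intro x y hx0 hx1 hy0 hyδ
      exact (h1 x y (abs_le.mpr ⟨by linarith, hx1⟩)
        (abs_le.mpr ⟨by linarith, by linarith⟩)).le
    refine ⟨δ, hδ0, ?_⟩
    have key : ∀ a b : ℚ, (a : ℝ) ∈ Set.Icc (-M) M → (b : ℝ) ∈ Set.Icc (-M) M →
        b ≤ a → (a : ℝ) - (b : ℝ) < δ → |g (a : ℝ) - g (b : ℝ)| < ε := by
      intro a b ha hb hba habδ
      rcases eq_or_lt_of_le hba with heq | hlt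
      · rw [heq]; simpa using hε
      set t : ℚ := a - b with htq
      have ht0 : 0 < t := sub_pos.mpr hlt
      have hnum : 0 < t.num := Rat.num_pos.mpr ht0
      have hq : 0 < t.den := t.pos
      have hq' : (0 : ℝ) < (t.den : ℝ) := by exact_mod_cast hq
      have htcast : ((a : ℝ) - (b : ℝ)) = (t : ℝ) := by push_cast [htq]; ring
      have htr0 : (0 : ℝ) < (t : ℝ) := by exact_mod_cast ht0
      have htδ : (t : ℝ) ≤ δ := by rw [← htcast]; linarith
      set p : ℕ := t.num.toNat with hpdef
      have hpcast : ((p : ℝ)) = (t.num : ℝ) := by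
        rw [hpdef]; exact_mod_cast Int.toNat_of_nonneg hnum.le
      have hcast : ((p : ℝ)) / (t.den : ℝ) = (t : ℝ) := by
        rw [hpcast, Rat.cast_def]
      have hpq : (p : ℝ) ≤ δ * t.den := by
        have : (p : ℝ) = (t : ℝ) * t.den := by
          rw [← hcast]; field_simp
        rw [this]
        nlinarith
      have hw := aux_small g δ (ε / 8) B hδ0 hδ14 (by positivity) le_rfl hB0 hEsmall
        p t.den hq hpq
      rw [hcast] at hw
      -- |g t - g 0| ≤ 3ε/8 + 4δB
      have hbM : |(b : ℝ)| ≤ M := abs_le.mpr ⟨(Set.mem_Icc.mp hb).1, (Set.mem_Icc.mp hb).2⟩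
      have hEb : |g ((b : ℝ) + (t : ℝ)) - g (b : ℝ) - g (t : ℝ) + g 0| < ε / 8 :=
        h2 (b : ℝ) (t : ℝ) hbM (abs_le.mpr ⟨by linarith, by linarith⟩)
      have hab : (a : ℝ) = (b : ℝ) + (t : ℝ) := by
        rw [← htcast]; ring
      rw [hab]
      have tri := abs_add_le (g (t : ℝ) - g 0)
        (g ((b : ℝ) + (t : ℝ)) - g (b : ℝ) - g (t : ℝ) + g 0)
      have : (g (t : ℝ) - g 0) + (g ((b : ℝ) + (t : ℝ)) - g (b : ℝ) - g (t : ℝ) + g 0)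
          = g ((b : ℝ) + (t : ℝ)) - g (b : ℝ) := by ring
      rw [this] at tri
      have := tri.trans (add_le_add hw hEb.le)
      linarith [hδB, this]
    intro a b ha hb hab
    rcases le_total b a with hba | hba
    · exact key a b ha hb hba (lt_of_le_of_lt (le_abs_self _) hab)
    · rw [abs_sub_comm]
      rw [abs_sub_comm] at hab
      exact key b a hb ha hba (lt_of_le_of_lt (le_abs_self _) hab)
  refine ⟨main, ?_⟩
  rw [Metric.continuous_iff]
  intro q₀ ε hε
  set M : ℝ := |(q₀ : ℝ)| + 1 with hMdef
  have hM : 1 ≤ M := by rw [hMdef]; linarith [abs_nonneg (q₀ : ℝ)]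
  obtain ⟨δ, hδ0, h⟩ := main M hM ε hε
  refine ⟨min δ 1, lt_min hδ0 one_pos, ?_⟩
  intro a hd
  rw [Rat.dist_eq] at hd
  have hd1 : |(a : ℝ) - (q₀ : ℝ)| < 1 := lt_of_lt_of_le hd (min_le_right _ _)
  have hdδ : |(a : ℝ) - (q₀ : ℝ)| < δ := lt_of_lt_of_le hd (min_le_left _ _)
  have haM : |(a : ℝ)| ≤ M := by
    calc |(a : ℝ)| = |(q₀ : ℝ) + ((a : ℝ) - (q₀ : ℝ))| := by ring_nf
      _ ≤ |(q₀ : ℝ)| + |(a : ℝ) - (q₀ : ℝ)| := abs_add_le _ _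
      _ ≤ M := by rw [hMdef]; linarith
  have hq₀M : |(q₀ : ℝ)| ≤ M := by rw [hMdef]; linarith
  rw [Real.dist_eq]
  exact h a q₀ (Set.mem_Icc.mpr (abs_le.mp haM)) (Set.mem_Icc.mpr (abs_le.mp hq₀M)) hdδ
end

section
/- Suppose g : ℝ → ℝ is a function such that the bivariate function Dg(x,y) = g(x+y) − g(x) − g(y) is continuous on ℝ². Then there exist a continuous function f : ℝ → ℝ and an additive function A : ℝ → ℝ (A(x+y) = A(x) + A(y) for all x, y ∈ ℝ) such that g = f + A, and f agrees on ℚ with the function u(t) = g(t) − (g(1) − g(0))·t. -/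
open intervalIntegral MeasureTheory

/-- If `Dg(x,y) = g(x+y) - g(x) - g(y)` is continuous on `ℝ²`, then `g = f + A`
with `f` continuous and `A` additive, where `f` agrees on `ℚ` with
`u(t) = g(t) - (g(1) - g(0))·t`. -/
theorem stmt_9 (g : ℝ → ℝ)
    (hF : Continuous (fun p : ℝ × ℝ => g (p.1 + p.2) - g p.1 - g p.2)) :
    ∃ f A : ℝ → ℝ, Continuous f ∧ (∀ x y : ℝ, A (x + y) = A x + A y) ∧
      g = f + A ∧
      ∀ q : ℚ, f (q : ℝ) = g (q : ℝ) - (g 1 - g 0) * (q : ℝ) := by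
  have int1 : ∀ (a b : ℝ) (F : ℝ → ℝ), Continuous F → IntervalIntegrable F volume a b :=
    fun a b F hF' => hF'.intervalIntegrable a b
  -- continuity of the Cauchy difference in the second variable
  have hDx : ∀ x : ℝ, Continuous fun t => g (x + t) - g x - g t := fun x =>
    hF.comp (continuous_const.prodMk continuous_id)
  -- the function m
  have hmc : Continuous (fun u => g (u + 1) - g u - g 1 + g 0) := by
    have : (fun u => g (u + 1) - g u - g 1 + g 0)
        = fun u => ((fun p : ℝ × ℝ => g (p.1 + p.2) - g p.1 - g p.2) (u, 1)) + g 0 := by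
      funext u; simp
    rw [this]
    exact (hF.comp (continuous_id.prodMk continuous_const)).add continuous_const
  set m : ℝ → ℝ := fun u => g (u + 1) - g u - g 1 + g 0 with hm_def
  set M : ℝ → ℝ := fun x => ∫ t in (0:ℝ)..x, m t with hM_def
  have hMc : Continuous M :=
    intervalIntegral.continuous_parametric_intervalIntegral_of_continuous
      (μ := volume) (a₀ := (0:ℝ)) (f := fun (_ : ℝ) t => m t)
      (hmc.comp continuous_snd) continuous_id
  set ψ : ℝ → ℝ := fun x => ∫ t in (0:ℝ)..(1:ℝ), (g (x + t) - g x - g t) with hψ_def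
  have hψc : Continuous ψ :=
    intervalIntegral.continuous_parametric_intervalIntegral_of_continuous'
      (μ := volume) (f := fun x t => g (x + t) - g x - g t) hF 0 1
  set f : ℝ → ℝ := fun x => M x - ψ x with hf_def
  have hfc : Continuous f := hMc.sub hψc
  -- key identity : f (x+y) - f x - f y = g (x+y) - g x - g y
  have key : ∀ x y : ℝ, f (x + y) - f x - f y = g (x + y) - g x - g y := by
    intro x y
    have e0 : ψ (x + y) = (∫ t in (0:ℝ)..1, (g (x + (y + t)) - g x - g (y + t)))
        - (g (x + y) - g x - g y) + ψ y := by
      simp only [hψ_def]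
      have h1 : (fun t => g ((x + y) + t) - g (x + y) - g t)
          = fun t => ((g (x + (y + t)) - g x - g (y + t)) - (g (x + y) - g x - g y))
            + (g (y + t) - g y - g t) := by
        funext t
        have e : (x + y) + t = x + (y + t) := by ring
        rw [e]; ring
      rw [h1, intervalIntegral.integral_add, intervalIntegral.integral_sub,
        intervalIntegral.integral_const]
      · norm_num
      · exact int1 _ _ _ ((hDx x).comp (continuous_const.add continuous_id))
      · exact int1 _ _ _ continuous_const
      · exact int1 _ _ _ (((hDx x).comp (continuous_const.add continuous_id)).sub continuous_const)
      · exact int1 _ _ _ (hDx y)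
    have e1 : (∫ t in (0:ℝ)..1, (g (x + (y + t)) - g x - g (y + t)))
        = ∫ s in y..(y + 1), (g (x + s) - g x - g s) := by
      have := intervalIntegral.integral_comp_add_left
        (a := (0:ℝ)) (b := 1) (fun s => g (x + s) - g x - g s) y
      simpa using this
    have e2 : (∫ s in y..(y + 1), (g (x + s) - g x - g s))
        = ψ x + (∫ s in (1:ℝ)..(y + 1), (g (x + s) - g x - g s))
          - ∫ s in (0:ℝ)..y, (g (x + s) - g x - g s) := by
      have c1 : (∫ s in (0:ℝ)..y, (g (x + s) - g x - g s))
          + (∫ s in y..(y+1), (g (x + s) - g x - g s))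
          = ∫ s in (0:ℝ)..(y+1), (g (x + s) - g x - g s) :=
        intervalIntegral.integral_add_adjacent_intervals (int1 _ _ _ (hDx x)) (int1 _ _ _ (hDx x))
      have c2 : (∫ s in (0:ℝ)..1, (g (x + s) - g x - g s))
          + (∫ s in (1:ℝ)..(y+1), (g (x + s) - g x - g s))
          = ∫ s in (0:ℝ)..(y+1), (g (x + s) - g x - g s) :=
        intervalIntegral.integral_add_adjacent_intervals (int1 _ _ _ (hDx x)) (int1 _ _ _ (hDx x))
      simp only [hψ_def]
      linarith [c1, c2]
    have e3 : (∫ s in (1:ℝ)..(y + 1), (g (x + s) - g x - g s))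
        = ∫ t in (0:ℝ)..y, (g (x + (1 + t)) - g x - g (1 + t)) := by
      have := intervalIntegral.integral_comp_add_left
        (a := (0:ℝ)) (b := y) (fun s => g (x + s) - g x - g s) 1
      rw [this]; norm_num [add_comm]
    have e4 : (∫ t in (0:ℝ)..y, (g (x + (1 + t)) - g x - g (1 + t)))
        - (∫ t in (0:ℝ)..y, (g (x + t) - g x - g t))
        = (∫ t in (0:ℝ)..y, m (x + t)) - ∫ t in (0:ℝ)..y, m t := by
      rw [← intervalIntegral.integral_sub
          (int1 0 y (fun t => g (x + (1 + t)) - g x - g (1 + t))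
            ((hDx x).comp (continuous_const.add continuous_id))) (int1 _ _ _ (hDx x)),
        ← intervalIntegral.integral_sub
          (int1 0 y (fun t => m (x + t)) (hmc.comp (continuous_const.add continuous_id)))
          (int1 _ _ _ hmc)]
      apply intervalIntegral.integral_congr
      intro t _
      have h1 : x + (1 + t) = (x + t) + 1 := by ring
      have h2 : (1 : ℝ) + t = t + 1 := by ring
      simp only [hm_def]
      rw [h1, h2]
      ring
    have e5 : (∫ t in (0:ℝ)..y, m (x + t)) = M (x + y) - M x := by
      have h1 := intervalIntegral.integral_comp_add_left (a := (0:ℝ)) (b := y) m x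
      have c1 : (∫ t in (0:ℝ)..x, m t) + (∫ t in x..(x+y), m t)
          = ∫ t in (0:ℝ)..(x+y), m t :=
        intervalIntegral.integral_add_adjacent_intervals (int1 _ _ _ hmc) (int1 _ _ _ hmc)
      rw [h1]
      simp only [hM_def, add_zero]
      linarith
    have e6 : ψ (x + y) - ψ x - ψ y = M (x + y) - M x - M y - (g (x + y) - g x - g y) := by
      have hψx : (∫ s in (0:ℝ)..y, (g (x + s) - g x - g s))
          = ∫ t in (0:ℝ)..y, (g (x + t) - g x - g t) := rfl
      have hMy : (∫ t in (0:ℝ)..y, m t) = M y := by simp only [hM_def]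
      rw [e0, e1, e2, e3]
      linarith [e4, e5]
    simp only [hf_def]
    linarith [e6]
  -- the additive part
  refine ⟨f, fun x => g x - f x, hfc, ?_, ?_, ?_⟩
  · intro x y
    simp only
    linarith [key x y]
  · funext x; simp
  · -- rational values
    have hA : ∀ x y : ℝ, (g (x+y) - f (x+y)) = (g x - f x) + (g y - f y) := by
      intro x y; have := key x y; linarith
    have hf1 : f 1 = g 0 := by
      have hcongr : (∫ t in (0:ℝ)..1, m t)
          = ∫ t in (0:ℝ)..1, ((g (1 + t) - g 1 - g t) + g 0) := by
        apply intervalIntegral.integral_congr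
        intro t _
        have e : t + 1 = 1 + t := by ring
        simp only [hm_def]
        rw [e]; ring
      have hsplit : (∫ t in (0:ℝ)..1, ((g (1 + t) - g 1 - g t) + g 0))
          = (∫ t in (0:ℝ)..1, (g (1 + t) - g 1 - g t)) + (1 - 0 : ℝ) • g 0 := by
        rw [intervalIntegral.integral_add (int1 _ _ _ (hDx 1)) (int1 _ _ _ continuous_const),
          intervalIntegral.integral_const]
      have : M 1 = ψ 1 + g 0 := by
        simp only [hM_def, hψ_def]
        rw [hcongr, hsplit]; norm_num
      simp only [hf_def]
      rw [this]; ring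
    intro q
    set A : ℝ → ℝ := fun x => g x - f x with hA_def
    have hAadd : ∀ x y : ℝ, A (x + y) = A x + A y := fun x y => hA x y
    let A' : ℝ →+ ℝ := AddMonoidHom.mk' A hAadd
    have hq : A ((q : ℝ)) = (q : ℝ) * A 1 := by
      have h := map_ratCast_smul A' ℝ ℝ q (1 : ℝ)
      simpa [A', smul_eq_mul] using h
    have : g (q : ℝ) - f (q : ℝ) = (q : ℝ) * (g 1 - g 0) := by
      have hA1 : A 1 = g 1 - g 0 := by simp [hA_def, hf1]
      rw [← hA1]
      simpa [hA_def] using hq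
    linarith [this]
end
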